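/- arXiv:1904.09418 — 12 statements merged into one kernel-verified Lean document; each statement's English description precedes it below -/
import Mathlib

section
/- Let α be an algebraic integer with minimal polynomial p(x) = x^n + a_1 x^{n-1} + ... + a_n over ℚ. If for every i = 1,...,n the integer (a_i)^n is divisible by (a_n)^i, then for every Galois conjugate τ(α) of α, the quotient α/τ(α) is an algebraic integer. -/
/-!
Write `p = x^n + a_1 x^{n-1} + ⋯ + a_n` and fix `c` with `c^n = a_n`. The polynomial whose roots
are the `r / c`, for `r` the roots of `p`, has coefficients `a_i / c^i`; their `n`-th powers
`a_i^n / a_n^i` are integers, so these coefficients, and hence all `r / c`, are algebraic integers.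
Its constant coefficient is `a_n / c^n = 1`, so its reverse is monic too, and all `c / r` are
algebraic integers as well. Thus `α / β = (α / c) (c / β)` is an algebraic integer.
-/

open Polynomial

namespace Polynomial

variable {R K : Type*} [CommRing R]

theorem Monic.isIntegral_of_isRoot [CommRing K] [Algebra R K] {q : K[X]} (hq : q.Monic)
    (hcoeff : ∀ i, IsIntegral R (q.coeff i)) {x : K} (hx : q.IsRoot x) : IsIntegral R x := by
  have hlifts : q ∈ lifts (algebraMap (integralClosure R K) K) :=
    (lifts_iff_coeff_lifts q).mpr fun i => ⟨⟨q.coeff i, hcoeff i⟩, rfl⟩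
  obtain ⟨q', hq'map, -, hq'monic⟩ := lifts_and_natDegree_eq_and_monic hlifts hq
  refine isIntegral_trans (A := integralClosure R K) x ⟨q', hq'monic, ?_⟩
  rwa [← eval_map, hq'map]

variable [Field K] [Algebra R K]

theorem isIntegral_inv_of_isRoot {q : K[X]} (hq0 : q.coeff 0 = 1)
    (hcoeff : ∀ i, IsIntegral R (q.coeff i)) {x : K} (hx : q.IsRoot x) : IsIntegral R x⁻¹ := by
  have hx0 : x ≠ 0 := by
    rintro rfl
    simp [IsRoot, ← coeff_zero_eq_eval_zero, hq0] at hx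
  let := invertibleOfNonzero hx0
  have hrev : q.reverse.Monic := by
    rw [Monic, reverse_leadingCoeff, trailingCoeff_eq_coeff_zero (by simp [hq0]), hq0]
  refine hrev.isIntegral_of_isRoot (fun i => ?_) ?_
  · rw [coeff_reverse]; exact hcoeff _
  · rw [IsRoot, eval, ← invOf_eq_inv, eval₂_reverse_eq_zero_iff]; exact hx

end Polynomial

section

variable {R K : Type*} [CommRing R] [Field K] [Algebra R K]

theorem isIntegral_coeff_scaleRoots_inv {p : R[X]} (hp : p.Monic) (hn : 0 < p.natDegree)
    (h : ∀ i, 1 ≤ i → i ≤ p.natDegree →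
      p.coeff 0 ^ i ∣ p.coeff (p.natDegree - i) ^ p.natDegree)
    {c : K} (hc : c ^ p.natDegree = algebraMap R K (p.coeff 0)) (hc0 : c ≠ 0) (j : ℕ) :
    IsIntegral R (((p.map (algebraMap R K)).scaleRoots c⁻¹).coeff j) := by
  set n := p.natDegree
  rw [coeff_scaleRoots, coeff_map, hp.natDegree_map]
  rcases le_or_gt j n with hjn | hjn
  · obtain ⟨d, hd⟩ : p.coeff 0 ^ (n - j) ∣ p.coeff j ^ n := by
      rcases Nat.eq_zero_or_pos (n - j) with hj | hj
      · rw [hj, pow_zero]; exact one_dvd _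
      · simpa [Nat.sub_sub_self hjn] using h (n - j) hj (Nat.sub_le n j)
    have hp0 : algebraMap R K (p.coeff 0) ≠ 0 := hc ▸ pow_ne_zero n hc0
    have hpow : (algebraMap R K (p.coeff j) * c⁻¹ ^ (n - j)) ^ n = algebraMap R K d := by
      calc (algebraMap R K (p.coeff j) * c⁻¹ ^ (n - j)) ^ n
          = algebraMap R K (p.coeff j) ^ n * ((c ^ n) ^ (n - j))⁻¹ := by ring
        _ = algebraMap R K d := by
          rw [hc, ← map_pow, ← map_pow, hd, map_mul, map_pow, mul_comm,
            inv_mul_cancel_left₀ (pow_ne_zero _ hp0)]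
    exact IsIntegral.of_pow hn (hpow ▸ isIntegral_algebraMap)
  · rw [coeff_eq_zero_of_natDegree_lt hjn, map_zero, zero_mul]
    exact isIntegral_zero

theorem isIntegral_div_of_isRoot {p : R[X]} (hp : p.Monic) (hn : 0 < p.natDegree)
    (h : ∀ i, 1 ≤ i → i ≤ p.natDegree →
      p.coeff 0 ^ i ∣ p.coeff (p.natDegree - i) ^ p.natDegree)
    {c : K} (hc : c ^ p.natDegree = algebraMap R K (p.coeff 0)) (hc0 : c ≠ 0)
    {x y : K} (hx : aeval x p = 0) (hy : aeval y p = 0) : IsIntegral R (x / y) := by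
  set q := (p.map (algebraMap R K)).scaleRoots c⁻¹
  have hcoeff := isIntegral_coeff_scaleRoots_inv hp hn h hc hc0
  have hroot (z : K) (hz : aeval z p = 0) : q.IsRoot (c⁻¹ * z) :=
    scaleRoots_eval₂_eq_zero (RingHom.id K) (by rwa [eval₂_map, RingHom.id_comp, ← aeval_def])
  have hq0 : q.coeff 0 = 1 := by
    rw [coeff_scaleRoots, coeff_map, hp.natDegree_map, Nat.sub_zero, inv_pow, ← hc,
      mul_inv_cancel₀ (pow_ne_zero _ hc0)]
  have hxc := ((monic_scaleRoots_iff _).mpr (hp.map _)).isIntegral_of_isRoot hcoeff (hroot x hx)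
  have hcy := isIntegral_inv_of_isRoot hq0 hcoeff (hroot y hy)
  have hxy : x / y = c⁻¹ * x * (c⁻¹ * y)⁻¹ := by
    rw [mul_inv, inv_inv]
    field_simp
  exact hxy ▸ hxc.mul hcy

end

/-- Ostrik's Lemma 2.7, (v) ⟹ (ii): if the minimal polynomial of an algebraic
integer α satisfies the divisibility condition `(a_n)^i ∣ (a_i)^n`, then α divided
by any of its Galois conjugates is an algebraic integer. -/
theorem stmt_0 (α : ℂ) (hα : IsIntegral ℤ α)
    (h : ∀ i : ℕ, 1 ≤ i → i ≤ (minpoly ℤ α).natDegree →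
      ((minpoly ℤ α).coeff 0) ^ i ∣
        ((minpoly ℤ α).coeff ((minpoly ℤ α).natDegree - i)) ^ (minpoly ℤ α).natDegree) :
    ∀ β : ℂ, Polynomial.aeval β (minpoly ℤ α) = 0 → IsIntegral ℤ (α / β) := by
  intro β hβ
  by_cases hα0 : α = 0
  · simpa [hα0] using isIntegral_zero
  have hn := minpoly.natDegree_pos hα
  have hp0 : (minpoly ℤ α).coeff 0 ≠ 0 := by
    have := minpoly.coeff_zero_ne_zero (A := ℚ) hα.tower_top hα0
    rwa [minpoly.isIntegrallyClosed_eq_field_fractions' ℚ hα, coeff_map, eq_intCast,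
      Int.cast_ne_zero] at this
  obtain ⟨c, hc⟩ := IsAlgClosed.exists_pow_nat_eq (algebraMap ℤ ℂ ((minpoly ℤ α).coeff 0)) hn
  have hc0 : c ≠ 0 := by
    rintro rfl
    rw [zero_pow hn.ne', eq_comm, eq_intCast, Int.cast_eq_zero] at hc
    exact hp0 hc
  exact isIntegral_div_of_isRoot (minpoly.monic hα) hn h hc hc0 (minpoly.aeval ℤ α) hβ
end

section
/- Let K be an algebraic number field and let α ∈ K be a nonzero algebraic integer such that α/τ(α) is an algebraic integer for every τ ∈ Gal(K/ℚ) (where K/ℚ is Galois). Then there exists a positive integer ℓ dividing [K:ℚ] such that α^ℓ = n·u for some integer n and some unit u in the ring of integers of K. -/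
/-!
Since `K/ℚ` is Galois, `N(α) = ∏_σ σ α`, so `α ^ [K:ℚ] / N(α) = ∏_σ α / σ α` is an algebraic
integer, and so is its inverse `∏_σ σ α / α`, each factor being a Galois conjugate of some
`α / τ α`. Hence `α ^ [K:ℚ]` is the rational integer `N(α)` times a unit.
-/

open NumberField Module

theorem NumberField.RingOfIntegers.exists_unit_coe_eq_of_mul_eq_one {K : Type*} [Field K]
    {x y : K} (hx : IsIntegral ℤ x) (hy : IsIntegral ℤ y) (hxy : x * y = 1) :
    ∃ u : (𝓞 K)ˣ, (u : K) = x :=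
  ⟨⟨⟨x, hx⟩, ⟨y, hy⟩, Subtype.ext hxy, Subtype.ext ((mul_comm y x).trans hxy)⟩, rfl⟩

section Galois

variable {F K : Type*} [Field F] [Field K] [Algebra F K]

theorem isIntegral_conj_div_self {α : K} (h : ∀ τ : K ≃ₐ[F] K, IsIntegral ℤ (α / τ α))
    (σ : K ≃ₐ[F] K) : IsIntegral ℤ (σ α / α) := by
  simpa [map_div₀] using (h σ.symm).map (σ.toRingHom.toIntAlgHom)

variable [FiniteDimensional F K] [IsGalois F K]

theorem prod_div_automorphisms (α : K) :
    ∏ σ : K ≃ₐ[F] K, α / σ α = α ^ finrank F K / algebraMap F K (Algebra.norm F α) := by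
  rw [Finset.prod_div_distrib, Finset.prod_const, Finset.card_univ, ← Nat.card_eq_fintype_card,
    IsGalois.card_aut_eq_finrank, Algebra.norm_eq_prod_automorphisms]

theorem prod_automorphisms_div (α : K) :
    ∏ σ : K ≃ₐ[F] K, σ α / α = algebraMap F K (Algebra.norm F α) / α ^ finrank F K := by
  rw [← inv_div, ← prod_div_automorphisms, ← Finset.prod_inv_distrib]
  simp only [inv_div]

theorem exists_unit_pow_finrank_eq_norm_mul {α : K} (hα0 : α ≠ 0)
    (h : ∀ τ : K ≃ₐ[F] K, IsIntegral ℤ (α / τ α)) :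
    ∃ u : (𝓞 K)ˣ, α ^ finrank F K = algebraMap F K (Algebra.norm F α) * u := by
  have hN : algebraMap F K (Algebra.norm F α) ≠ 0 := by
    simpa [Algebra.norm_ne_zero_iff] using hα0
  have hx : IsIntegral ℤ (α ^ finrank F K / algebraMap F K (Algebra.norm F α)) := by
    rw [← prod_div_automorphisms]
    exact IsIntegral.prod _ fun σ _ => h σ
  have hy : IsIntegral ℤ (algebraMap F K (Algebra.norm F α) / α ^ finrank F K) := by
    rw [← prod_automorphisms_div]
    exact IsIntegral.prod _ fun σ _ => isIntegral_conj_div_self h σ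
  obtain ⟨u, hu⟩ := RingOfIntegers.exists_unit_coe_eq_of_mul_eq_one hx hy (by field_simp)
  exact ⟨u, by rw [hu, mul_div_cancel₀ _ hN]⟩

end Galois

/-- If α is a nonzero algebraic integer in a Galois number field K such that
α/τ(α) is an algebraic integer for every τ ∈ Gal(K/ℚ), then some power
α^ℓ with ℓ ∣ [K:ℚ] is an integer multiple of a unit of the ring of integers. -/
theorem stmt_1 (K : Type*) [Field K] [NumberField K] [IsGalois ℚ K]
    (α : K) (hα : IsIntegral ℤ α) (hα0 : α ≠ 0)
    (h : ∀ τ : K ≃ₐ[ℚ] K, IsIntegral ℤ (α / τ α)) :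
    ∃ ℓ : ℕ, 0 < ℓ ∧ ℓ ∣ Module.finrank ℚ K ∧
      ∃ (n : ℤ) (u : (NumberField.RingOfIntegers K)ˣ),
        α ^ ℓ = (n : K) *
          algebraMap (NumberField.RingOfIntegers K) K (u : NumberField.RingOfIntegers K) := by
  obtain ⟨n, hn⟩ := IsIntegrallyClosed.isIntegral_iff.mp (Algebra.isIntegral_norm ℚ hα)
  obtain ⟨u, hu⟩ := exists_unit_pow_finrank_eq_norm_mul hα0 h
  refine ⟨finrank ℚ K, finrank_pos, dvd_rfl, n, u, ?_⟩
  rw [hu, ← hn, eq_intCast, map_intCast]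
end

section
/- Let N ≥ 2 be a square-free integer and let α = a + b√N with a, b ∈ (1/2)ℤ be an algebraic integer in ℚ(√N). If 4a²/(a² − N b²) is an integer, then α is a d-number (i.e., α/σ(α) is an algebraic integer where σ(√N) = −√N), and conversely. -/
/-!
With `D = a² - Nb²`, the quotient `β = α / σ α = α² / D` is a root of `X² - tX + 1` with
`t = 2(a² + Nb²)/D = 4a²/D - 2`. If `ab ≠ 0` then `β = (a² + Nb²)/D + (2ab/D)√N` is
irrational, so this quadratic is the minimal polynomial of `β` over `ℚ`; since `ℤ` is
integrally closed, `β` is integral exactly when `t ∈ ℤ`. If `ab = 0` then `β ∈ {-1, 0, 1}`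
and `4a²/D ∈ {0, 4}`.
-/

open Polynomial

theorem irrational_sqrt_natCast_of_squarefree {N : ℕ} (hN : 2 ≤ N) (hsf : Squarefree N) :
    Irrational √N := by
  refine irrational_sqrt_natCast_iff.mpr fun ⟨r, hr⟩ => ?_
  have : r = 1 := Nat.isUnit_iff.mp (hsf r (by rw [hr]))
  subst this
  omega

theorem minpoly_eq_of_notMem_range {L : Type*} [Field L] [Algebra ℚ L] {β : L}
    (hβ : β ∉ Set.range (algebraMap ℚ L)) (hβint : IsIntegral ℚ β) {t u : ℚ}
    (hroot : β ^ 2 - algebraMap ℚ L t * β + algebraMap ℚ L u = 0) :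
    minpoly ℚ β = X ^ 2 - C t * X + C u := by
  have hmon : (X ^ 2 - C t * X + C u : ℚ[X]).Monic := by monicity!
  refine eq_of_dvd_of_natDegree_le_of_leadingCoeff (minpoly.dvd ℚ β ?_) ?_ ?_
  · simpa using hroot
  · have : (X ^ 2 - C t * X + C u : ℚ[X]).natDegree = 2 := by compute_degree!
    rw [this]
    exact (minpoly.two_le_natDegree_iff hβint).mpr hβ
  · rw [(minpoly.monic hβint).leadingCoeff, hmon.leadingCoeff]

theorem isIntegral_int_iff_of_quadratic {L : Type*} [Field L] [Algebra ℚ L] {β : L}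
    (hβ : β ∉ Set.range (algebraMap ℚ L)) {t u : ℚ}
    (hroot : β ^ 2 - algebraMap ℚ L t * β + algebraMap ℚ L u = 0) :
    IsIntegral ℤ β ↔ (∃ m : ℤ, t = m) ∧ ∃ n : ℤ, u = n := by
  constructor
  · intro hβint
    have hmin := minpoly_eq_of_notMem_range hβ hβint.tower_top hroot
    rw [minpoly.isIntegrallyClosed_eq_field_fractions' ℚ hβint] at hmin
    have hcoeff (k : ℕ) :
        (X ^ 2 - C t * X + C u : ℚ[X]).coeff k = ((minpoly ℤ β).coeff k : ℚ) := by
      rw [← hmin, coeff_map, eq_intCast]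
    refine ⟨⟨-(minpoly ℤ β).coeff 1, ?_⟩, ⟨(minpoly ℤ β).coeff 0, ?_⟩⟩
    · have h1 : -t = (minpoly ℤ β).coeff 1 := by simpa [coeff_X_pow, coeff_C] using hcoeff 1
      push_cast
      linarith
    · simpa [coeff_X_pow, coeff_C] using hcoeff 0
  · rintro ⟨⟨m, rfl⟩, ⟨n, rfl⟩⟩
    refine ⟨X ^ 2 - C m * X + C n, by monicity!, ?_⟩
    simp only [eval₂_add, eval₂_sub, eval₂_mul, eval₂_X_pow, eval₂_X, eval₂_C]
    simpa using hroot

theorem isIntegral_div_self {R L : Type*} [CommRing R] [Field L] [Algebra R L] (x : L) :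
    IsIntegral R (x / x) := by
  rcases eq_or_ne x 0 with rfl | hx
  · simpa using isIntegral_zero
  · simpa [hx] using isIntegral_one

section QuadraticConjugate

variable {s : ℝ} {d : ℚ}

theorem isIntegral_div_conj_of_eq_zero_or_eq_zero {a b : ℚ} (hab : a = 0 ∨ b = 0) :
    IsIntegral ℤ (((a : ℝ) + b * s) / (a - b * s)) := by
  rcases hab with rfl | rfl
  · simpa [div_neg] using (isIntegral_div_self (R := ℤ) ((b : ℝ) * s)).neg
  · simpa using isIntegral_div_self (R := ℤ) (a : ℝ)

theorem sq_sub_mul_sq_ne_zero (hirr : Irrational s) (hs : s ^ 2 = d) (a : ℚ) {b : ℚ}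
    (hb : b ≠ 0) : a ^ 2 - d * b ^ 2 ≠ 0 := by
  intro hD
  have : (s - (a / b : ℚ)) * (s + (a / b : ℚ)) = 0 := by
    have : d = (a / b) ^ 2 := by field_simp; linarith
    have hd : (d : ℝ) = ((a / b : ℚ) : ℝ) ^ 2 := by exact_mod_cast this
    linear_combination hs + hd
  rcases mul_eq_zero.mp this with h | h
  · exact hirr.ne_rat _ (sub_eq_zero.mp h)
  · exact hirr.ne_rat (-(a / b)) (by push_cast at h ⊢; linarith)

theorem div_conj_eq (hs : s ^ 2 = d) {a b : ℚ} (hD : a ^ 2 - d * b ^ 2 ≠ 0) :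
    ((a : ℝ) + b * s) / (a - b * s) =
      ((a ^ 2 + d * b ^ 2) / (a ^ 2 - d * b ^ 2) : ℚ) +
        ((2 * a * b / (a ^ 2 - d * b ^ 2) : ℚ) : ℝ) * s := by
  have hconj : ((a : ℝ) + b * s) * (a - b * s) = ((a ^ 2 - d * b ^ 2 : ℚ) : ℝ) := by
    push_cast; rw [← hs]; ring
  have hD' : ((a ^ 2 - d * b ^ 2 : ℚ) : ℝ) ≠ 0 := by exact_mod_cast hD
  have hσ : (a : ℝ) - b * s ≠ 0 := fun h => hD' (by rw [← hconj, h, mul_zero])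
  rw [div_eq_iff hσ, Rat.cast_div, Rat.cast_div, div_mul_eq_mul_div, ← add_div,
    div_mul_eq_mul_div, eq_div_iff hD']
  push_cast
  linear_combination (2 * (a : ℝ) * (b : ℝ) ^ 2) * hs

theorem div_conj_sq_sub_mul_add_one_eq_zero (hs : s ^ 2 = d) {a b : ℚ}
    (hD : a ^ 2 - d * b ^ 2 ≠ 0) :
    (((a : ℝ) + b * s) / (a - b * s)) ^ 2 -
        ((2 * (a ^ 2 + d * b ^ 2) / (a ^ 2 - d * b ^ 2) : ℚ) : ℝ) *
          (((a : ℝ) + b * s) / (a - b * s)) + 1 = 0 := by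
  rw [div_conj_eq hs hD]
  have hD' : ((a ^ 2 - d * b ^ 2 : ℚ) : ℝ) ≠ 0 := by exact_mod_cast hD
  push_cast at hD' ⊢
  field_simp
  linear_combination (4 * (a : ℝ) ^ 2 * (b : ℝ) ^ 2) * hs

theorem irrational_div_conj (hirr : Irrational s) (hs : s ^ 2 = d) {a b : ℚ} (ha : a ≠ 0)
    (hb : b ≠ 0) : Irrational (((a : ℝ) + b * s) / (a - b * s)) := by
  have hD := sq_sub_mul_sq_ne_zero hirr hs a hb
  rw [div_conj_eq hs hD]
  exact (hirr.ratCast_mul (by positivity)).ratCast_add _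

end QuadraticConjugate

theorem stmt_2_general (N : ℕ) (hN : 2 ≤ N) (hsf : Squarefree N) (a b : ℚ) :
    IsIntegral ℤ (((a : ℝ) + (b : ℝ) * Real.sqrt N) /
        ((a : ℝ) - (b : ℝ) * Real.sqrt N)) ↔
      ∃ z : ℤ, 4 * a ^ 2 = (z : ℚ) * (a ^ 2 - N * b ^ 2) := by
  have hirr := irrational_sqrt_natCast_of_squarefree hN hsf
  have hs : √N ^ 2 = ((N : ℚ) : ℝ) := by simp
  by_cases hab : a = 0 ∨ b = 0
  · refine iff_of_true (isIntegral_div_conj_of_eq_zero_or_eq_zero hab) ?_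
    rcases hab with rfl | rfl
    · exact ⟨0, by simp⟩
    · exact ⟨4, by simp⟩
  push Not at hab
  have hD := sq_sub_mul_sq_ne_zero hirr hs a hab.2
  rw [isIntegral_int_iff_of_quadratic (irrational_div_conj hirr hs hab.1 hab.2)
    (t := 2 * (a ^ 2 + N * b ^ 2) / (a ^ 2 - N * b ^ 2)) (u := 1)
    (by rw [map_one]; exact div_conj_sq_sub_mul_add_one_eq_zero hs hD)]
  rw [and_iff_left ⟨1, Int.cast_one.symm⟩]
  constructor
  · rintro ⟨m, hm⟩
    refine ⟨m + 2, ?_⟩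
    rw [div_eq_iff hD] at hm
    push_cast
    linear_combination hm
  · rintro ⟨z, hz⟩
    refine ⟨z - 2, ?_⟩
    rw [div_eq_iff hD]
    push_cast
    linear_combination hz

/-- Lemma 3.3 (i) ⟺ (iv): an algebraic integer α = a + b√N in ℚ(√N)
(a, b half-integers, N ≥ 2 square-free) is a d-number iff
4a²/(a² − Nb²) is an integer. -/
theorem stmt_2 (N : ℕ) (hN : 2 ≤ N) (hsf : Squarefree N) (a b : ℚ)
    (ha : ∃ z : ℤ, a = z / 2) (hb : ∃ z : ℤ, b = z / 2)
    (hint : IsIntegral ℤ ((a : ℝ) + (b : ℝ) * Real.sqrt N)) :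
    IsIntegral ℤ (((a : ℝ) + (b : ℝ) * Real.sqrt N) /
        ((a : ℝ) - (b : ℝ) * Real.sqrt N)) ↔
      ∃ z : ℤ, 4 * a ^ 2 = (z : ℚ) * (a ^ 2 - N * b ^ 2) :=
  stmt_2_general N hN hsf a b
end

section
/- Let N be a square-free negative integer with N ≠ −1 and N ≠ −3. Then an algebraic integer α in ℚ(√N) is a d-number if and only if α = ℓ·(√N)^δ for some ℓ ∈ ℤ and δ ∈ {0,1}. -/
/-!
Since `s ^ 2 = N < 0`, `conj s = -s`, so `a - b * s` is the complex conjugate of `α` and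
`u = α / conj α` has norm one. Writing `u = x + y * s` with `x y : ℚ`, integrality of `u` and of
its conjugate makes the trace `2 * x` and the norm `x ^ 2 - y ^ 2 * N = 1` integers. Then
`(2 * y) ^ 2 * N = (2 * x) ^ 2 - 4 ∈ {-4, -3, 0}`, and as `N` is squarefree `2 * y` is an integer,
which forces `y = 0` unless `N ∈ {-1, -3}`. Since `y = 2 * a * b / (a ^ 2 - b ^ 2 * N)`, this gives
`a * b = 0`, i.e. `α` is an integer or an integer multiple of `s`.
-/
open ComplexConjugate

theorem Rat.exists_int_eq_of_isIntegral_cast {K : Type*} [Field K] [CharZero K] {q : ℚ}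
    (h : IsIntegral ℤ (q : K)) : ∃ k : ℤ, q = k := by
  rw [← eq_ratCast (algebraMap ℚ K), isIntegral_algebraMap_iff (algebraMap ℚ K).injective] at h
  obtain ⟨k, hk⟩ := IsIntegrallyClosed.isIntegral_iff.mp h
  exact ⟨k, by simpa using hk.symm⟩

theorem Squarefree.exists_int_eq_of_sq_mul_eq_int {N : ℤ} (hN : Squarefree N) {q : ℚ} {k : ℤ}
    (h : q ^ 2 * N = k) : ∃ z : ℤ, q = z := by
  have hnum : q.num ^ 2 * N = k * (q.den : ℤ) ^ 2 := by
    have hq : (q.num : ℚ) = q * q.den := (Rat.mul_den_eq_num q).symm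
    exact_mod_cast (show (q.num : ℚ) ^ 2 * N = k * (q.den : ℚ) ^ 2 by rw [hq, ← h]; ring)
  have hcop : IsCoprime (q.den : ℤ) q.num := by
    rw [Int.isCoprime_iff_gcd_eq_one]
    simpa [Int.gcd, Nat.coprime_comm] using q.reduced.symm
  have hdvd : (q.den : ℤ) * q.den ∣ N := by
    rw [← sq]
    exact hcop.pow.dvd_of_dvd_mul_left ⟨k, by rw [hnum]; ring⟩
  have hden : q.den = 1 := by simpa using Int.isUnit_iff_natAbs_eq.mp (hN _ hdvd)
  exact ⟨q.num, ((Rat.den_eq_one_iff q).mp hden).symm⟩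

theorem Complex.conj_eq_neg_of_sq_eq_of_neg {s : ℂ} {r : ℝ} (hs : s ^ 2 = r) (hr : r < 0) :
    conj s = -s := by
  have hre := congrArg Complex.re hs
  have him := congrArg Complex.im hs
  simp only [sq, Complex.mul_re, Complex.mul_im, Complex.ofReal_re, Complex.ofReal_im] at hre him
  have him0 : s.im ≠ 0 := fun h0 ↦ by rw [h0] at hre; nlinarith
  have : s.re = 0 := by
    simpa [him0] using (show s.re * s.im * 2 = 0 by linarith)
  apply Complex.ext <;> simp [this]

theorem isIntegral_div_self_s3 {K : Type*} [Field K] (z : K) : IsIntegral ℤ (z / z) := by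
  rcases eq_or_ne z 0 with rfl | hz
  · simpa using isIntegral_zero
  · simpa [hz] using isIntegral_one

theorem Int.eq_zero_of_sq_mul_eq_sq_sub_four {N : ℤ} (hN : Squarefree N) (hneg : N < 0)
    (h1 : N ≠ -1) (h3 : N ≠ -3) {t m : ℤ} (h : t ^ 2 * N = m ^ 2 - 4) : t = 0 := by
  have h4 : N ≠ -4 := by
    rintro rfl
    simpa using Int.isUnit_iff_natAbs_eq.mp (hN 2 ⟨-1, by norm_num⟩)
  have hm : m ^ 2 ≤ 4 := by nlinarith [sq_nonneg t]
  have hmlo : -2 ≤ m := by nlinarith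
  have hmhi : m ≤ 2 := by nlinarith
  have ht : t ^ 2 ≤ 4 := by nlinarith [sq_nonneg m]
  have htlo : -2 ≤ t := by nlinarith
  have hthi : t ≤ 2 := by nlinarith
  interval_cases m <;> interval_cases t <;> omega

theorem Rat.eq_zero_of_sq_sub_sq_mul_eq_one {N : ℤ} (hN : Squarefree N) (hneg : N < 0)
    (h1 : N ≠ -1) (h3 : N ≠ -3) {x y : ℚ} {m : ℤ} (hx : 2 * x = m)
    (h : x ^ 2 - y ^ 2 * N = 1) : y = 0 := by
  have hq : (2 * y) ^ 2 * N = ((m ^ 2 - 4 : ℤ) : ℚ) := by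
    push_cast; rw [← hx]; linear_combination -4 * h
  obtain ⟨t, ht⟩ := hN.exists_int_eq_of_sq_mul_eq_int hq
  have hZ : t ^ 2 * N = m ^ 2 - 4 := by exact_mod_cast ht ▸ hq
  have := Int.eq_zero_of_sq_mul_eq_sq_sub_four hN hneg h1 h3 hZ
  simpa [this] using ht

section

variable {N : ℤ} {s : ℂ}

theorem exists_int_trace_and_norm_of_isIntegral (hs : s ^ 2 = N) (hcs : conj s = -s) {x y : ℚ}
    (h : IsIntegral ℤ ((x : ℂ) + y * s)) :
    (∃ m : ℤ, 2 * x = m) ∧ ∃ n : ℤ, x ^ 2 - y ^ 2 * N = n := by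
  have hc : IsIntegral ℤ ((x : ℂ) - y * s) := by
    simpa [hcs, sub_eq_add_neg] using h.map (starRingEnd ℂ).toIntAlgHom
  have htrace : (x : ℂ) + y * s + (x - y * s) = ((2 * x : ℚ) : ℂ) := by push_cast; ring
  have hnorm : ((x : ℂ) + y * s) * (x - y * s) = ((x ^ 2 - y ^ 2 * N : ℚ) : ℂ) := by
    push_cast; linear_combination -(y : ℂ) ^ 2 * hs
  exact ⟨Rat.exists_int_eq_of_isIntegral_cast (htrace ▸ h.add hc),
    Rat.exists_int_eq_of_isIntegral_cast (hnorm ▸ h.mul hc)⟩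

theorem mul_eq_zero_of_isIntegral_div_conj (hN : Squarefree N) (hneg : N < 0) (h1 : N ≠ -1)
    (h3 : N ≠ -3) (hs : s ^ 2 = N) (hcs : conj s = -s) {a b : ℚ}
    (h : IsIntegral ℤ ((a + b * s) / conj (a + b * s))) : a * b = 0 := by
  have hNQ : (N : ℚ) < 0 := by exact_mod_cast hneg
  rcases eq_or_ne (a ^ 2 - b ^ 2 * N) 0 with hD | hD
  · have ha : a = 0 := by nlinarith [sq_nonneg a, sq_nonneg b]
    simp [ha]
  have hconj : conj ((a : ℂ) + b * s) = a - b * s := by simp [hcs, sub_eq_add_neg]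
  have hDC : ((a : ℂ) ^ 2 - b ^ 2 * N) ≠ 0 := by exact_mod_cast hD
  have hconj_ne : (a : ℂ) - b * s ≠ 0 := by
    refine right_ne_zero_of_mul (a := (a : ℂ) + b * s) ?_
    convert hDC using 1; linear_combination -(b : ℂ) ^ 2 * hs
  have hquot : ((a : ℂ) + b * s) / conj ((a : ℂ) + b * s) =
      (((a ^ 2 + b ^ 2 * N) / (a ^ 2 - b ^ 2 * N) : ℚ) : ℂ) +
        ((2 * a * b / (a ^ 2 - b ^ 2 * N) : ℚ) : ℂ) * s := by
    rw [hconj, div_eq_iff hconj_ne]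
    push_cast
    field_simp
    linear_combination 2 * (a : ℂ) * b ^ 2 * hs
  obtain ⟨⟨m, hm⟩, -⟩ := exists_int_trace_and_norm_of_isIntegral hs hcs (hquot ▸ h)
  have hunit : ((a ^ 2 + b ^ 2 * N) / (a ^ 2 - b ^ 2 * N)) ^ 2 -
      (2 * a * b / (a ^ 2 - b ^ 2 * N)) ^ 2 * N = 1 := by
    field_simp; ring
  have := Rat.eq_zero_of_sq_sub_sq_mul_eq_one hN hneg h1 h3 hm hunit
  simpa [hD] using this

theorem exists_int_mul_pow_of_mul_eq_zero (hN : Squarefree N) (hs : s ^ 2 = N)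
    (hcs : conj s = -s) {a b : ℚ} (hab : a * b = 0) (h : IsIntegral ℤ ((a : ℂ) + b * s)) :
    ∃ (ℓ : ℤ) (δ : Fin 2), (a : ℂ) + b * s = ℓ * s ^ (δ : ℕ) := by
  rcases mul_eq_zero.mp hab with rfl | rfl
  · obtain ⟨-, n, hn⟩ := exists_int_trace_and_norm_of_isIntegral hs hcs h
    obtain ⟨ℓ, rfl⟩ := hN.exists_int_eq_of_sq_mul_eq_int (q := b) (k := -n) (by push_cast; linarith)
    exact ⟨ℓ, 1, by simp⟩
  · obtain ⟨ℓ, rfl⟩ := Rat.exists_int_eq_of_isIntegral_cast (K := ℂ) (by simpa using h)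
    exact ⟨ℓ, 0, by simp⟩

theorem isIntegral_int_mul_pow_div_conj (hcs : conj s = -s) (ℓ : ℤ) (δ : Fin 2) :
    IsIntegral ℤ (ℓ * s ^ (δ : ℕ) / conj (ℓ * s ^ (δ : ℕ))) := by
  fin_cases δ
  · simpa using isIntegral_div_self_s3 (ℓ : ℂ)
  · simpa [hcs, div_neg] using (isIntegral_div_self_s3 ((ℓ : ℂ) * s)).neg

end

/-- For square-free negative N ∉ {−1,−3}: an algebraic integer α in ℚ(√N)
is a d-number iff α = ℓ·(√N)^δ for some ℓ ∈ ℤ, δ ∈ {0,1}. -/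
theorem stmt_3 (N : ℤ) (hNneg : N < 0) (hsf : Squarefree N)
    (h1 : N ≠ -1) (h3 : N ≠ -3)
    (s : ℂ) (hs : s ^ 2 = (N : ℂ))
    (a b : ℚ) (α : ℂ) (hα : α = (a : ℂ) + (b : ℂ) * s)
    (hint : IsIntegral ℤ α) :
    IsIntegral ℤ (α / ((a : ℂ) - (b : ℂ) * s)) ↔
      ∃ (ℓ : ℤ) (δ : Fin 2), α = (ℓ : ℂ) * s ^ (δ : ℕ) := by
  have hcs : conj s = -s :=
    Complex.conj_eq_neg_of_sq_eq_of_neg (r := N) (by simpa using hs) (by exact_mod_cast hNneg)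
  have hconj : (a : ℂ) - b * s = conj α := by simp [hα, hcs, sub_eq_add_neg]
  rw [hconj]
  constructor
  · intro hu
    subst hα
    exact exists_int_mul_pow_of_mul_eq_zero hsf hs hcs
      (mul_eq_zero_of_isIntegral_div_conj hsf hNneg h1 h3 hs hcs hu) hint
  · rintro ⟨ℓ, δ, rfl⟩
    exact isIntegral_int_mul_pow_div_conj hcs ℓ δ
end

section
/- An algebraic integer α in ℚ(i) is a d-number if and only if α = ℓ·i^m·(1+i)^δ for some ℓ, m ∈ ℤ and δ ∈ {0,1}. -/
/-!
Write `α = x + y i`. Integrality forces `x, y ∈ ℤ`: the traces `2x` of `α` and `2y` of `-iα`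
and the norm `x² + y²` are rational integers, and `(2x)² + (2y)² ≡ 0 mod 4` makes `2x`, `2y`
even. The quotient `u = α / ᾱ` lies in `ℚ(i)` and has norm `1`, so if it is integral it is one of
the Gaussian units `±1, ±i`, and `α = u ᾱ` puts `α` on one of the lines `y = 0`, `x = 0`,
`y = x`, `y = -x`. Conversely `ℓ iᵐ (1 + i)^δ` divided by its conjugate is the unit `(-1)ᵐ i^δ`.
-/

open Complex ComplexConjugate

theorem exists_intCast_eq_of_isIntegral_ratCast {K : Type*} [Field K] [CharZero K] {q : ℚ}
    (h : IsIntegral ℤ (q : K)) : ∃ n : ℤ, (n : ℚ) = q := by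
  rw [← eq_ratCast (algebraMap ℚ K) q, isIntegral_algebraMap_iff (algebraMap ℚ K).injective] at h
  exact IsIntegrallyClosed.isIntegral_iff.mp h

theorem Int.even_and_even_of_four_dvd_sq_add_sq {p q : ℤ} (h : 4 ∣ p ^ 2 + q ^ 2) :
    Even p ∧ Even q := by
  simp only [even_iff_two_dvd]
  obtain ⟨k, rfl | rfl⟩ := Int.even_or_odd' p <;> obtain ⟨l, rfl | rfl⟩ := Int.even_or_odd' q <;>
    ring_nf at h <;> omega

theorem isIntegral_mul_div_self {R K : Type*} [CommRing R] [Field K] [Algebra R K] {u : K}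
    (hu : IsIntegral R u) (w : K) : IsIntegral R (u * w / w) := by
  rcases eq_or_ne w 0 with rfl | hw
  · simpa using isIntegral_zero
  · rwa [mul_div_cancel_right₀ u hw]

theorem Complex.exists_int_of_isIntegral_ratCast_add_mul_I {a b : ℚ}
    (h : IsIntegral ℤ ((a : ℂ) + b * I)) : ∃ x y : ℤ, (x : ℚ) = a ∧ (y : ℚ) = b := by
  have hconj : IsIntegral ℤ ((a : ℂ) - b * I) := by
    simpa [sub_eq_add_neg] using map_isIntegral_int (starRingEnd ℂ) h
  obtain ⟨p, hp⟩ := exists_intCast_eq_of_isIntegral_ratCast (K := ℂ) (q := 2 * a) <| by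
    rw [show ((2 * a : ℚ) : ℂ) = (a + b * I) + (a - b * I) by push_cast; ring]
    exact h.add hconj
  obtain ⟨q, hq⟩ := exists_intCast_eq_of_isIntegral_ratCast (K := ℂ) (q := 2 * b) <| by
    rw [show ((2 * b : ℚ) : ℂ) = I * ((a - b * I) - (a + b * I)) by
      push_cast; linear_combination 2 * (b : ℂ) * I_sq]
    exact isIntegral_int_I.mul (hconj.sub h)
  obtain ⟨n, hn⟩ := exists_intCast_eq_of_isIntegral_ratCast (K := ℂ) (q := a ^ 2 + b ^ 2) <| by
    rw [show ((a ^ 2 + b ^ 2 : ℚ) : ℂ) = (a + b * I) * (a - b * I) by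
      push_cast; linear_combination (b : ℂ) ^ 2 * I_sq]
    exact h.mul hconj
  have h4 : 4 ∣ p ^ 2 + q ^ 2 := ⟨n, by rw [← @Int.cast_inj ℚ]; push_cast; rw [hp, hq, hn]; ring⟩
  obtain ⟨⟨x, rfl⟩, ⟨y, rfl⟩⟩ := Int.even_and_even_of_four_dvd_sq_add_sq h4
  push_cast at hp hq
  exact ⟨x, y, by linarith, by linarith⟩

theorem Complex.eq_one_or_neg_one_or_I_or_neg_I_of_sq_add_sq_eq_one {A B : ℤ}
    (h : A ^ 2 + B ^ 2 = 1) :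
    (A + B * I : ℂ) = 1 ∨ (A + B * I : ℂ) = -1 ∨ (A + B * I : ℂ) = I ∨ (A + B * I : ℂ) = -I := by
  obtain ⟨hA₁, hA₂⟩ : -1 ≤ A ∧ A ≤ 1 := by constructor <;> nlinarith
  obtain ⟨hB₁, hB₂⟩ : -1 ≤ B ∧ B ≤ 1 := by constructor <;> nlinarith
  interval_cases A <;> interval_cases B <;> simp_all

theorem Complex.intCast_add_intCast_mul_I_inj {x y x' y' : ℤ}
    (h : (x + y * I : ℂ) = x' + y' * I) : x = x' ∧ y = y' := by
  simpa using Complex.ext_iff.mp h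

theorem Complex.exists_eq_intCast_mul_I_zpow_mul_one_add_I_pow_of_eq_mul_conj {x y : ℤ} {u : ℂ}
    (hu : u = 1 ∨ u = -1 ∨ u = I ∨ u = -I) (h : (x + y * I : ℂ) = u * (x - y * I)) :
    ∃ (ℓ m : ℤ) (δ : Fin 2), (x + y * I : ℂ) = ℓ * I ^ m * (1 + I) ^ (δ : ℕ) := by
  rcases hu with rfl | rfl | rfl | rfl
  · obtain ⟨-, hy⟩ := intCast_add_intCast_mul_I_inj (x' := x) (y' := -y)
      (by rw [h]; push_cast; ring)
    exact ⟨x, 0, 0, by simp [show y = 0 by omega]⟩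
  · obtain ⟨hx, -⟩ := intCast_add_intCast_mul_I_inj (x' := -x) (y' := y)
      (by rw [h]; push_cast; ring)
    exact ⟨y, 1, 0, by simp [show x = 0 by omega]⟩
  · obtain ⟨hx, -⟩ := intCast_add_intCast_mul_I_inj (x' := y) (y' := x)
      (by rw [h]; linear_combination -(y : ℂ) * I_sq)
    exact ⟨x, 0, 1, by simp [hx, mul_add]⟩
  · obtain ⟨hx, -⟩ := intCast_add_intCast_mul_I_inj (x' := -y) (y' := -x)
      (by rw [h]; push_cast; linear_combination (y : ℂ) * I_sq)
    exact ⟨x, -1, 1, by simp [show y = -x by omega, mul_add, mul_assoc, add_comm]⟩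

theorem Complex.exists_eq_intCast_mul_I_zpow_mul_one_add_I_pow_of_isIntegral_div {x y : ℤ}
    (h : IsIntegral ℤ ((x + y * I : ℂ) / (x - y * I))) :
    ∃ (ℓ m : ℤ) (δ : Fin 2), (x + y * I : ℂ) = ℓ * I ^ m * (1 + I) ^ (δ : ℕ) := by
  set z : ℂ := x + y * I with hz
  have hconj : (x - y * I : ℂ) = conj z := by simp [hz, sub_eq_add_neg]
  rcases eq_or_ne z 0 with h0 | h0
  · exact ⟨0, 0, 0, by simp [h0]⟩
  have hw : (x - y * I : ℂ) ≠ 0 := hconj ▸ (map_ne_zero _).mpr h0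
  have hN : (x ^ 2 + y ^ 2 : ℂ) ≠ 0 := by
    rw [show (x ^ 2 + y ^ 2 : ℂ) = z * (x - y * I) by linear_combination (y : ℂ) ^ 2 * I_sq]
    exact mul_ne_zero h0 hw
  have hab : z / (x - y * I) = (((x ^ 2 - y ^ 2) / (x ^ 2 + y ^ 2) : ℚ) : ℂ) +
      ((2 * x * y / (x ^ 2 + y ^ 2) : ℚ) : ℂ) * I := by
    rw [div_eq_iff hw]
    push_cast
    field_simp
    rw [hz]
    linear_combination 2 * (x : ℂ) * (y : ℂ) ^ 2 * I_sq
  rw [hab] at h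
  obtain ⟨A, B, hA, hB⟩ := exists_int_of_isIntegral_ratCast_add_mul_I h
  rw [← hA, ← hB] at hab
  push_cast at hab
  have hnorm : A ^ 2 + B ^ 2 = 1 := by
    have := congrArg normSq hab
    rw [normSq_div, hconj, normSq_conj, div_self (normSq_eq_zero.not.mpr h0)] at this
    rw [← ofReal_intCast, ← ofReal_intCast, normSq_add_mul_I] at this
    exact_mod_cast this.symm
  refine exists_eq_intCast_mul_I_zpow_mul_one_add_I_pow_of_eq_mul_conj
    (eq_one_or_neg_one_or_I_or_neg_I_of_sq_add_sq_eq_one hnorm) ?_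
  rw [← hab, div_mul_cancel₀ _ hw]

theorem Complex.isIntegral_div_of_eq_intCast_mul_I_zpow_mul_one_add_I_pow {x y ℓ m : ℤ} {δ : ℕ}
    (h : (x + y * I : ℂ) = ℓ * I ^ m * (1 + I) ^ δ) :
    IsIntegral ℤ ((x + y * I : ℂ) / (x - y * I)) := by
  have hconj : (x - y * I : ℂ) = ℓ * (-I) ^ m * (1 - I) ^ δ := by
    rw [show (x - y * I : ℂ) = conj (x + y * I) by simp [sub_eq_add_neg], h]
    simp [map_zpow₀, sub_eq_add_neg]
  have hu : (x + y * I : ℂ) = ((-1) ^ m * I ^ δ) * (x - y * I) := by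
    have hm : (-1 : ℂ) ^ m * (-I) ^ m = I ^ m := by rw [← mul_zpow]; ring_nf
    have hδ : I ^ δ * (1 - I) ^ δ = (1 + I) ^ δ := by
      rw [← mul_pow]; congr 1; linear_combination -I_sq
    rw [hconj, h, ← hm, ← hδ]
    ring
  have hunit : IsIntegral ℤ ((-1 : ℂ) ^ m * I ^ δ) := by
    rw [← Int.cast_negOnePow]
    exact isIntegral_algebraMap.mul (isIntegral_int_I.pow δ)
  rw [hu]
  exact isIntegral_mul_div_self hunit _

/-- An algebraic integer α in ℚ(i) is a d-number iff α = ℓ·i^m·(1+i)^δ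
for some ℓ, m ∈ ℤ and δ ∈ {0,1}. -/
theorem stmt_4 (a b : ℚ) (α : ℂ) (hα : α = (a : ℂ) + (b : ℂ) * Complex.I)
    (hint : IsIntegral ℤ α) :
    IsIntegral ℤ (α / ((a : ℂ) - (b : ℂ) * Complex.I)) ↔
      ∃ (ℓ m : ℤ) (δ : Fin 2),
        α = (ℓ : ℂ) * Complex.I ^ m * (1 + Complex.I) ^ (δ : ℕ) := by
  subst hα
  obtain ⟨x, y, rfl, rfl⟩ := Complex.exists_int_of_isIntegral_ratCast_add_mul_I hint
  push_cast
  exact ⟨Complex.exists_eq_intCast_mul_I_zpow_mul_one_add_I_pow_of_isIntegral_div,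
    fun ⟨_, _, _, h⟩ ↦ Complex.isIntegral_div_of_eq_intCast_mul_I_zpow_mul_one_add_I_pow h⟩
end

section
/- An algebraic integer α in ℚ(√−3) is a d-number if and only if α = ℓ·ω^m·(√−3)^δ for some ℓ, m ∈ ℤ and δ ∈ {0,1}, where ω = (1+√−3)/2. -/
/-!
If `γ = α / ᾱ` is integral, it is an algebraic integer of norm one in `ℚ(√−3)`, hence one of the
six units `±ω^(2m)`. Putting `u = ω^m √−3^δ` with `(-1)^δ = ±`, one has `u / ū = γ`, so `α / u` is
fixed by complex conjugation, i.e. rational, and the integrality of `α` makes it an integer.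
Conversely, for `α = ℓ ω^m √−3^δ` the quotient `α / ᾱ` is the unit `(-1)^δ ω^(2m)`.
-/

open Complex ComplexConjugate

noncomputable def sqrtNegThree : ℂ := I * (Real.sqrt 3 : ℂ)

local notation "√-3" => sqrtNegThree

noncomputable def ω : ℂ := (1 + √-3) / 2

theorem sqrtNegThree_sq : √-3 ^ 2 = -3 := by
  have h : ((Real.sqrt 3 : ℝ) : ℂ) ^ 2 = 3 := by
    rw [← ofReal_pow, Real.sq_sqrt (by norm_num)]; norm_num
  rw [sqrtNegThree, mul_pow, I_sq, h]; ring

theorem sqrtNegThree_ne_zero : √-3 ≠ 0 := fun h ↦ by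
  simpa [h] using sqrtNegThree_sq

theorem conj_sqrtNegThree : conj √-3 = -√-3 := by simp [sqrtNegThree]

theorem ω_mul_conj : ω * conj ω = 1 := by
  simp only [ω, map_div₀, map_add, map_one, map_ofNat, conj_sqrtNegThree]
  linear_combination (-1 / 4 : ℂ) * sqrtNegThree_sq

theorem ω_ne_zero : ω ≠ 0 := left_ne_zero_of_mul_eq_one ω_mul_conj

theorem conj_ω : conj ω = ω⁻¹ := (inv_eq_of_mul_eq_one_right ω_mul_conj).symm

theorem ω_sq : ω ^ 2 = ω - 1 := by
  rw [ω]; linear_combination (1 / 4 : ℂ) * sqrtNegThree_sq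

theorem isIntegral_conj {z : ℂ} (hz : IsIntegral ℤ z) : IsIntegral ℤ (conj z) :=
  hz.map (starRingEnd ℂ).toIntAlgHom

theorem isIntegral_sqrtNegThree : IsIntegral ℤ √-3 :=
  ⟨.X ^ 2 + 3, by monicity!, by simp [sqrtNegThree_sq]⟩

theorem isIntegral_ω : IsIntegral ℤ ω :=
  ⟨.X ^ 2 - .X + 1, by monicity!, by simp [ω_sq]⟩

theorem isIntegral_ω_zpow (k : ℤ) : IsIntegral ℤ (ω ^ k) := by
  obtain ⟨n, rfl | rfl⟩ := Int.eq_nat_or_neg k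
  · simpa using isIntegral_ω.pow n
  · rw [zpow_neg, zpow_natCast, ← inv_pow, ← conj_ω]
    exact (isIntegral_conj isIntegral_ω).pow n

theorem exists_int_eq_of_isIntegral_ratCast {r : ℚ} (hr : IsIntegral ℤ (r : ℂ)) :
    ∃ n : ℤ, r = n := by
  rw [← eq_ratCast (algebraMap ℚ ℂ) r, isIntegral_algebraMap_iff (algebraMap ℚ ℂ).injective,
    IsIntegrallyClosed.isIntegral_iff] at hr
  obtain ⟨n, hn⟩ := hr
  exact ⟨n, hn.symm⟩

def eisensteinField : Subfield ℂ where
  carrier := {z | ∃ p q : ℚ, z = p + q * √-3}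
  zero_mem' := ⟨0, 0, by simp⟩
  one_mem' := ⟨1, 0, by simp⟩
  add_mem' := by
    rintro _ _ ⟨p, q, rfl⟩ ⟨p', q', rfl⟩
    exact ⟨p + p', q + q', by push_cast; ring⟩
  neg_mem' := by
    rintro _ ⟨p, q, rfl⟩
    exact ⟨-p, -q, by push_cast; ring⟩
  mul_mem' := by
    rintro _ _ ⟨p, q, rfl⟩ ⟨p', q', rfl⟩
    exact ⟨p * p' - 3 * q * q', p * q' + q * p', by
      push_cast; linear_combination (q * q' : ℂ) * sqrtNegThree_sq⟩
  inv_mem' := by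
    rintro _ ⟨p, q, rfl⟩
    refine ⟨p / (p ^ 2 + 3 * q ^ 2), -q / (p ^ 2 + 3 * q ^ 2), ?_⟩
    rcases eq_or_ne (p ^ 2 + 3 * q ^ 2) 0 with hn | hn
    · obtain ⟨rfl, rfl⟩ : p = 0 ∧ q = 0 := by
        constructor <;> nlinarith [sq_nonneg p, sq_nonneg q]
      simp
    · have hn' : ((p : ℂ) ^ 2 + 3 * q ^ 2) ≠ 0 := by exact_mod_cast hn
      have hnorm : ((p : ℂ) + q * √-3) * (p - q * √-3) = p ^ 2 + 3 * q ^ 2 := by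
        linear_combination (-q ^ 2 : ℂ) * sqrtNegThree_sq
      refine inv_eq_of_mul_eq_one_right ?_
      push_cast
      rw [show (p / (p ^ 2 + 3 * q ^ 2) + -q / (p ^ 2 + 3 * q ^ 2) * √-3 : ℂ)
          = (p - q * √-3) / (p ^ 2 + 3 * q ^ 2) by ring, ← mul_div_assoc, hnorm, div_self hn']

theorem ω_mem_eisensteinField : ω ∈ eisensteinField :=
  ⟨1 / 2, 1 / 2, by rw [ω]; push_cast; ring⟩

theorem sqrtNegThree_mem_eisensteinField : √-3 ∈ eisensteinField := ⟨0, 1, by simp⟩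

theorem conj_mem_eisensteinField {z : ℂ} (hz : z ∈ eisensteinField) :
    conj z ∈ eisensteinField := by
  obtain ⟨p, q, rfl⟩ := hz
  exact ⟨p, -q, by simp [conj_sqrtNegThree]⟩

theorem exists_rat_eq_of_conj_eq_self {z : ℂ} (hz : z ∈ eisensteinField) (h : conj z = z) :
    ∃ r : ℚ, z = r := by
  obtain ⟨p, q, rfl⟩ := hz
  have hq : (q : ℂ) = 0 := by
    simp only [map_add, map_mul, map_ratCast, conj_sqrtNegThree] at h
    have h2 : (2 * q : ℂ) * √-3 = 0 := by linear_combination -h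
    simpa [sqrtNegThree_ne_zero] using h2
  exact ⟨p, by simp [hq]⟩

/-- The ring of integers of `ℚ(√−3)` is `ℤ[ω]`: here `p + q√−3 = x + yω`. The trace and norm of
`z` and the trace of `z√−3` are rational integers, namely `2p`, `p² + 3q²` and `-6q`. -/
theorem exists_int_of_isIntegral_add_mul_sqrtNegThree {p q : ℚ}
    (h : IsIntegral ℤ ((p : ℂ) + q * √-3)) : ∃ x y : ℤ, p = x + y / 2 ∧ q = y / 2 := by
  set z : ℂ := p + q * √-3
  have hconj : conj z = p - q * √-3 := by simp [z, conj_sqrtNegThree, sub_eq_add_neg]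
  obtain ⟨T, hT⟩ := exists_int_eq_of_isIntegral_ratCast (r := 2 * p) <| by
    have : ((2 * p : ℚ) : ℂ) = z + conj z := by rw [hconj]; push_cast; ring
    exact this ▸ h.add (isIntegral_conj h)
  obtain ⟨N, hN⟩ := exists_int_eq_of_isIntegral_ratCast (r := p ^ 2 + 3 * q ^ 2) <| by
    have : ((p ^ 2 + 3 * q ^ 2 : ℚ) : ℂ) = z * conj z := by
      rw [hconj]; push_cast; linear_combination (q ^ 2 : ℂ) * sqrtNegThree_sq
    exact this ▸ h.mul (isIntegral_conj h)
  obtain ⟨E, hE⟩ := exists_int_eq_of_isIntegral_ratCast (r := 6 * q) <| by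
    have hzs := h.mul isIntegral_sqrtNegThree
    have : ((6 * q : ℚ) : ℂ) = -(z * √-3 + conj (z * √-3)) := by
      rw [map_mul, hconj, conj_sqrtNegThree]; push_cast
      linear_combination (2 * q : ℂ) * sqrtNegThree_sq
    exact this ▸ (hzs.add (isIntegral_conj hzs)).neg
  have hE2 : E ^ 2 = 3 * (4 * N - T ^ 2) := by
    have : (E : ℚ) ^ 2 = 3 * (4 * N - T ^ 2) := by rw [← hE, ← hN, ← hT]; ring
    exact_mod_cast this
  obtain ⟨D, rfl⟩ : (3 : ℤ) ∣ E := Int.prime_three.dvd_of_dvd_pow (n := 2) ⟨_, hE2⟩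
  have hTD : Even (T - D) := by
    have : Even (T ^ 2 + 3 * D ^ 2) := ⟨2 * N, by linarith⟩
    simpa [Int.even_add, Int.even_sub, Int.even_mul, Int.even_pow,
      show ¬ Even (3 : ℤ) by decide] using this
  obtain ⟨x, hx⟩ := hTD
  refine ⟨x, D, ?_, ?_⟩
  · have : (T : ℚ) = x + x + D := by exact_mod_cast (by omega : T = x + x + D)
    linarith
  · push_cast at hE
    linarith

theorem exists_int_eq_of_isIntegral_ratCast_mul_sqrtNegThree_pow {r : ℚ} (δ : Fin 2)
    (h : IsIntegral ℤ ((r : ℂ) * √-3 ^ (δ : ℕ))) : ∃ n : ℤ, r = n := by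
  fin_cases δ
  · exact exists_int_eq_of_isIntegral_ratCast (by simpa using h)
  · obtain ⟨x, y, hx, hy⟩ :=
      exists_int_of_isIntegral_add_mul_sqrtNegThree (p := 0) (q := r) (by simpa using h)
    exact ⟨-x, by push_cast; linarith⟩

theorem exists_eq_neg_one_pow_mul_ω_pow_of_mul_conj_eq_one {z : ℂ} (hK : z ∈ eisensteinField)
    (hz : IsIntegral ℤ z) (hnorm : z * conj z = 1) :
    ∃ (m : ℕ) (δ : Fin 2), z = (-1) ^ (δ : ℕ) * ω ^ (2 * m) := by
  obtain ⟨p, q, rfl⟩ := hK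
  obtain ⟨x, y, rfl, rfl⟩ := exists_int_of_isIntegral_add_mul_sqrtNegThree hz
  have hxy : x ^ 2 + x * y + y ^ 2 = 1 := by
    have : ((x ^ 2 + x * y + y ^ 2 : ℤ) : ℂ) = 1 := by
      rw [← hnorm]; simp only [map_add, map_mul, map_ratCast, conj_sqrtNegThree]; push_cast
      linear_combination (y ^ 2 / 4 : ℂ) * sqrtNegThree_sq
    exact_mod_cast this
  have hω : (((x + y / 2 : ℚ) : ℂ) + ((y / 2 : ℚ) : ℂ) * √-3) = x + y * ω := by
    rw [ω]; push_cast; ring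
  rw [hω]
  obtain ⟨hx₁, hx₂⟩ : -1 ≤ x ∧ x ≤ 1 := by constructor <;> nlinarith [sq_nonneg (x + 2 * y)]
  obtain ⟨hy₁, hy₂⟩ : -1 ≤ y ∧ y ≤ 1 := by constructor <;> nlinarith [sq_nonneg (2 * x + y)]
  interval_cases x <;> interval_cases y <;> norm_num at hxy
  · exact ⟨0, 1, by simp⟩
  · exact ⟨1, 0, by simp [ω_sq]; ring⟩
  · exact ⟨2, 0, by norm_num [pow_mul, ω_sq]; linear_combination (-ω - ω ^ 2) * ω_sq⟩
  · exact ⟨2, 1, by norm_num [pow_mul, ω_sq]; linear_combination (ω ^ 2 + ω) * ω_sq⟩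
  · exact ⟨1, 1, by simp [ω_sq]; ring⟩
  · exact ⟨0, 0, by simp⟩

theorem conj_div_eq_self_of_mul_conj_eq {α u : ℂ} (h : α * conj u = u * conj α) :
    conj (α / u) = α / u := by
  rcases eq_or_ne u 0 with rfl | hu
  · simp
  rw [map_div₀, div_eq_div_iff ((map_ne_zero _).2 hu) hu]
  linear_combination -h

theorem exists_eq_of_isIntegral_div_conj {α : ℂ} (hK : α ∈ eisensteinField)
    (hα : IsIntegral ℤ α) (h : IsIntegral ℤ (α / conj α)) :
    ∃ (ℓ m : ℤ) (δ : Fin 2), α = ℓ * ω ^ m * √-3 ^ (δ : ℕ) := by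
  rcases eq_or_ne α 0 with rfl | hα₀
  · exact ⟨0, 0, 0, by simp⟩
  have hα₀' : conj α ≠ 0 := (map_ne_zero _).2 hα₀
  obtain ⟨m, δ, hγ⟩ := exists_eq_neg_one_pow_mul_ω_pow_of_mul_conj_eq_one
    (div_mem hK (conj_mem_eisensteinField hK)) h (by rw [map_div₀, conj_conj]; field_simp)
  set u := ω ^ m * √-3 ^ (δ : ℕ) with hu_def
  have hu : u ≠ 0 := mul_ne_zero (pow_ne_zero _ ω_ne_zero) (pow_ne_zero _ sqrtNegThree_ne_zero)
  have hpow : (ω * conj ω) ^ m = 1 := by rw [ω_mul_conj, one_pow]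
  have hunit : (-1) ^ (δ : ℕ) * ω ^ (2 * m) * conj u = u := by
    have hsign : ((-1 : ℂ) ^ (δ : ℕ)) ^ 2 = 1 := by
      rw [← pow_mul, pow_mul', neg_one_sq, one_pow]
    rw [hu_def, map_mul, map_pow, map_pow, conj_sqrtNegThree, neg_pow]
    linear_combination (ω ^ (2 * m) * conj ω ^ m * √-3 ^ (δ : ℕ)) * hsign
      + (ω ^ m * √-3 ^ (δ : ℕ)) * hpow
  have hsym : α * conj u = u * conj α := by
    rw [div_eq_iff hα₀'] at hγ
    linear_combination conj u * hγ + conj α * hunit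
  have huK : u ∈ eisensteinField :=
    mul_mem (pow_mem ω_mem_eisensteinField _) (pow_mem sqrtNegThree_mem_eisensteinField _)
  obtain ⟨r, hr⟩ :=
    exists_rat_eq_of_conj_eq_self (div_mem hK huK) (conj_div_eq_self_of_mul_conj_eq hsym)
  have hαr : α = r * u := by rw [← hr, div_mul_cancel₀ _ hu]
  obtain ⟨ℓ, rfl⟩ := exists_int_eq_of_isIntegral_ratCast_mul_sqrtNegThree_pow δ <| by
    have : (r : ℂ) * √-3 ^ (δ : ℕ) = α * conj ω ^ m := by
      rw [hαr, hu_def]; linear_combination (-(r : ℂ) * √-3 ^ (δ : ℕ)) * hpow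
    exact this ▸ hα.mul ((isIntegral_conj isIntegral_ω).pow m)
  exact ⟨ℓ, m, δ, by rw [hαr, zpow_natCast]; push_cast; ring⟩

theorem isIntegral_div_conj_int_mul_ω_zpow_mul_sqrtNegThree_pow (ℓ m : ℤ) (δ : Fin 2) :
    IsIntegral ℤ (ℓ * ω ^ m * √-3 ^ (δ : ℕ) / conj (ℓ * ω ^ m * √-3 ^ (δ : ℕ))) := by
  rcases eq_or_ne (ℓ : ℂ) 0 with hℓ | hℓ
  · simpa [hℓ] using isIntegral_zero
  have hunit : ℓ * ω ^ m * √-3 ^ (δ : ℕ) / conj (ℓ * ω ^ m * √-3 ^ (δ : ℕ))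
      = (-1) ^ (δ : ℕ) * (ω ^ m) ^ 2 := by
    simp only [map_mul, map_intCast, map_zpow₀, map_pow, conj_ω, conj_sqrtNegThree, inv_zpow]
    have := zpow_ne_zero m ω_ne_zero
    fin_cases δ <;> field_simp <;> simp [sqrtNegThree_ne_zero]
  rw [hunit]
  exact (isIntegral_one.neg.pow _).mul ((isIntegral_ω_zpow m).pow 2)

/-- An algebraic integer α in ℚ(√−3) is a d-number iff α = ℓ·ω^m·(√−3)^δ
for some ℓ, m ∈ ℤ and δ ∈ {0,1}, where ω = (1+√−3)/2 and √−3 = i√3. -/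
theorem stmt_5 (a b : ℚ) (α : ℂ)
    (hα : α = (a : ℂ) + (b : ℂ) * (Complex.I * (Real.sqrt 3 : ℂ)))
    (hint : IsIntegral ℤ α) :
    IsIntegral ℤ (α / ((a : ℂ) - (b : ℂ) * (Complex.I * (Real.sqrt 3 : ℂ)))) ↔
      ∃ (ℓ m : ℤ) (δ : Fin 2),
        α = (ℓ : ℂ) * ((1 + Complex.I * (Real.sqrt 3 : ℂ)) / 2) ^ m *
          (Complex.I * (Real.sqrt 3 : ℂ)) ^ (δ : ℕ) := by
  have hconj : (a : ℂ) - b * (I * (Real.sqrt 3 : ℂ)) = conj α := by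
    simp [hα, sub_eq_add_neg]
  rw [hconj]
  refine ⟨exists_eq_of_isIntegral_div_conj ⟨a, b, hα⟩ hint, ?_⟩
  rintro ⟨ℓ, m, δ, rfl⟩
  exact isIntegral_div_conj_int_mul_ω_zpow_mul_sqrtNegThree_pow ℓ m δ
end

section
/- Let N ≥ 2 be a square-free integer with fundamental unit ε_N of ℚ(√N) satisfying norm(ε_N) = −1, and write ε_N = (t_N + u_N√N)/2. Then the quartic polynomial x⁴ − k·t_N·x² − k² is irreducible over ℤ for every square-free integer k ≥ 2. Equivalently, there is no square-free k ≥ 2 with √(k·ε_N) ∈ ℚ(√N). -/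
/-! A unit `ε = (t + u√N)/2` of norm `-1` satisfies `t² + 4 = N u²`, and `t² + 4` is never a
square for `t ≠ 0`. Hence `√N` is irrational, and `x⁴ - ktx² - k²` has no factor over `ℤ`: an
integer root `s` or a factorisation `(x² + b)(x² + d)` would make `(2s² - kt)²`, resp. `(b - d)²`,
equal to `k²(t² + 4)`, while `(x² + ax + b)(x² - ax + b)` would give `b² = -k²`. Finally, if
`(a + b√N)² = kε`, taking norms gives `(a² - Nb²)² = -k² < 0`. -/

open Polynomial

lemma Int.not_isSquare_sq_add_four {t : ℤ} (ht : t ≠ 0) : ¬IsSquare (t ^ 2 + 4) := by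
  rintro ⟨m, hm⟩
  have hm' : |m| ^ 2 = |t| ^ 2 + 4 := by rw [sq_abs, sq_abs]; linarith
  have ht1 : 1 ≤ |t| := Int.one_le_abs ht
  have hgt : |t| < |m| := by nlinarith [abs_nonneg m]
  have hle : |m| ≤ |t| + 1 := by nlinarith
  have : 2 * |t| = 3 := by nlinarith
  omega

lemma Int.not_isSquare_sq_mul_sq_add_four {k t : ℤ} (hk : k ≠ 0) (ht : t ≠ 0) :
    ¬IsSquare (k ^ 2 * (t ^ 2 + 4)) := by
  rintro ⟨A, hA⟩
  obtain ⟨m, rfl⟩ : k ∣ A :=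
    (Int.pow_dvd_pow_iff two_ne_zero).mp ⟨t ^ 2 + 4, by rw [hA]; ring⟩
  refine Int.not_isSquare_sq_add_four ht ⟨m, mul_left_cancel₀ (pow_ne_zero 2 hk) ?_⟩
  linear_combination hA

lemma Polynomial.Monic.eq_X_sq_add_C_mul_X_add_C {R : Type*} [CommRing R] {g : R[X]}
    (hg : g.Monic) (h2 : g.natDegree = 2) : g = X ^ 2 + C (g.coeff 1) * X + C (g.coeff 0) := by
  have hlead : g.coeff 2 = 1 := h2 ▸ hg.coeff_natDegree
  conv_lhs => rw [g.as_sum_range' 3 (by omega)]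
  simp only [Finset.sum_range_succ, Finset.sum_range_zero, hlead, ← C_mul_X_pow_eq_monomial,
    pow_zero, pow_one, mul_one, one_mul, zero_add, map_one]
  ring

section Quartic

variable {k t : ℤ}

lemma quartic_eval_ne_zero (hk : k ≠ 0) (ht : t ≠ 0) (s : ℤ) :
    (X ^ 4 - C (k * t) * X ^ 2 - C (k ^ 2) : ℤ[X]).eval s ≠ 0 := by
  intro h
  simp only [eval_sub, eval_mul, eval_pow, eval_X, eval_C] at h
  -- completing the square in `s ^ 2`
  exact Int.not_isSquare_sq_mul_sq_add_four hk ht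
    ⟨2 * s ^ 2 - k * t, by linear_combination -4 * h⟩

lemma quadratic_mul_quadratic_ne_quartic (hk : k ≠ 0) (ht : t ≠ 0) (a b c d : ℤ) :
    (X ^ 2 + C a * X + C b) * (X ^ 2 + C c * X + C d) ≠
      (X ^ 4 - C (k * t) * X ^ 2 - C (k ^ 2) : ℤ[X]) := by
  intro h
  rw [show (X ^ 2 + C a * X + C b) * (X ^ 2 + C c * X + C d) =
      X ^ 4 + C (a + c) * X ^ 3 + C (b + d + a * c) * X ^ 2 + C (a * d + b * c) * X + C (b * d)
      by simp only [C_add, C_mul]; ring] at h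
  have e3 := congrArg (coeff · 3) h
  have e2 := congrArg (coeff · 2) h
  have e1 := congrArg (coeff · 1) h
  have e0 := congrArg (coeff · 0) h
  simp only [coeff_add, coeff_sub, coeff_C_mul, coeff_C, coeff_X_pow, coeff_X] at e3 e2 e1 e0
  norm_num at e3 e2 e1 e0
  obtain rfl : c = -a := by linarith
  obtain rfl | hdb : a = 0 ∨ d = b := by
    simpa [sub_eq_zero] using mul_eq_zero.mp (show a * (d - b) = 0 by linear_combination e1)
  · exact Int.not_isSquare_sq_mul_sq_add_four hk ht
      ⟨b - d, by linear_combination -(b + d - k * t) * e2 + 4 * e0⟩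
  · rw [hdb] at e0
    nlinarith [sq_nonneg b, sq_pos_of_ne_zero hk]

theorem irreducible_quartic (hk : k ≠ 0) (ht : t ≠ 0) :
    Irreducible (X ^ 4 - C (k * t) * X ^ 2 - C (k ^ 2) : ℤ[X]) := by
  set p : ℤ[X] := X ^ 4 - C (k * t) * X ^ 2 - C (k ^ 2)
  have hdeg : p.natDegree = 4 := by unfold p; compute_degree!
  have hmonic : p.Monic := by unfold p; monicity!
  rw [hmonic.irreducible_iff_lt_natDegree_lt (fun h => by simp [h] at hdeg), hdeg]
  rintro q hq hqdeg ⟨r, hqr⟩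
  obtain hq1 | hq2 : q.natDegree = 1 ∨ q.natDegree = 2 := by
    simp only [Nat.reduceDiv, Finset.mem_Ioc] at hqdeg; omega
  · refine quartic_eval_ne_zero hk ht (-q.coeff 0)
      (eval_eq_zero_of_dvd_of_eval_eq_zero ⟨r, hqr⟩ ?_)
    rw [hq.eq_X_add_C hq1]
    simp
  · have hr : r.Monic := hq.of_mul_monic_left (hqr ▸ hmonic)
    have hr2 : r.natDegree = 2 := by
      have := congrArg natDegree hqr
      rw [hq.natDegree_mul hr] at this
      omega
    rw [hq.eq_X_sq_add_C_mul_X_add_C hq2, hr.eq_X_sq_add_C_mul_X_add_C hr2] at hqr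
    exact quadratic_mul_quadratic_ne_quartic hk ht _ _ _ _ hqr.symm

end Quartic

lemma Irrational.eq_zero_of_add_mul_eq_zero {r : ℝ} (hr : Irrational r) {p q : ℚ}
    (h : (p : ℝ) + q * r = 0) : p = 0 ∧ q = 0 := by
  obtain rfl | hq := eq_or_ne q 0
  · exact ⟨by simpa using h, rfl⟩
  · exact absurd h ((hr.ratCast_mul hq).ratCast_add p).ne_zero

lemma irrational_sqrt_of_sq_sub_mul_sq_eq_neg_four {N : ℕ} {t u : ℤ} (ht : t ≠ 0)
    (hnorm : t ^ 2 - (N : ℤ) * u ^ 2 = -4) : Irrational √N := by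
  rw [irrational_sqrt_natCast_iff]
  rintro ⟨m, rfl⟩
  exact Int.not_isSquare_sq_add_four ht ⟨m * u, by push_cast at hnorm; linear_combination hnorm⟩

lemma sq_ne_mul_of_sq_sub_mul_sq_eq_neg_four {N : ℕ} {t u k : ℤ} (ht : t ≠ 0) (hk : k ≠ 0)
    (hnorm : t ^ 2 - (N : ℤ) * u ^ 2 = -4) (a b : ℚ) :
    ((a : ℝ) + b * √N) ^ 2 ≠ k * ((t + u * √N) / 2) := by
  intro h
  have hN : (√N) ^ 2 = (N : ℝ) := Real.sq_sqrt (Nat.cast_nonneg N)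
  obtain ⟨hrat, hirr⟩ :=
    (irrational_sqrt_of_sq_sub_mul_sq_eq_neg_four ht hnorm).eq_zero_of_add_mul_eq_zero
      (p := a ^ 2 + N * b ^ 2 - k * t / 2) (q := 2 * a * b - k * u / 2)
      (by push_cast; linear_combination h - (b : ℝ) ^ 2 * hN)
  have hnorm' : (t : ℚ) ^ 2 - N * u ^ 2 = -4 := by exact_mod_cast hnorm
  have : (a ^ 2 - N * b ^ 2) ^ 2 = -(k : ℚ) ^ 2 := by
    linear_combination (a ^ 2 + N * b ^ 2 + k * t / 2) * hrat
      - N * (2 * a * b + k * u / 2) * hirr + (k : ℚ) ^ 2 / 4 * hnorm'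
  have hk' : (k : ℚ) ≠ 0 := Int.cast_ne_zero.mpr hk
  nlinarith [sq_nonneg (a ^ 2 - N * b ^ 2 : ℚ), sq_pos_of_ne_zero hk']

open Polynomial in
theorem stmt_7_general (N : ℕ) (t u : ℤ)
    (ht : 0 < t)
    (hnorm : t ^ 2 - (N : ℤ) * u ^ 2 = -4) :
    ∀ k : ℤ, 2 ≤ k → Squarefree k →
      Irreducible ((X ^ 4 - C (k * t) * X ^ 2 - C (k ^ 2) : Polynomial ℤ)) ∧
      ¬ ∃ a b : ℚ, ((a : ℝ) + (b : ℝ) * Real.sqrt N) ^ 2 =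
          (k : ℝ) * (((t : ℝ) + (u : ℝ) * Real.sqrt N) / 2) := by
  intro k hk _
  have hk0 : k ≠ 0 := by omega
  exact ⟨irreducible_quartic hk0 ht.ne', fun ⟨a, b, h⟩ =>
    sq_ne_mul_of_sq_sub_mul_sq_eq_neg_four ht.ne' hk0 hnorm a b h⟩

open Polynomial in
/-- If the fundamental unit ε_N = (t + u√N)/2 of ℚ(√N) has norm −1
(i.e. t² − Nu² = −4), then for every square-free k ≥ 2 the quartic
x⁴ − k·t·x² − k² is irreducible over ℤ; equivalently √(k·ε_N) ∉ ℚ(√N). -/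
theorem stmt_7 (N : ℕ) (hN : 2 ≤ N) (hsf : Squarefree N) (t u : ℤ)
    (ht : 0 < t) (hu : 0 < u)
    (hnorm : t ^ 2 - (N : ℤ) * u ^ 2 = -4)
    (hεint : IsIntegral ℤ (((t : ℝ) + (u : ℝ) * Real.sqrt N) / 2))
    (hε1 : 1 < ((t : ℝ) + (u : ℝ) * Real.sqrt N) / 2)
    (hmin : ∀ x : ℝ, IsIntegral ℤ x → IsIntegral ℤ x⁻¹ →
      (∃ a b : ℚ, x = (a : ℝ) + (b : ℝ) * Real.sqrt N) → 1 < x →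
      ((t : ℝ) + (u : ℝ) * Real.sqrt N) / 2 ≤ x) :
    ∀ k : ℤ, 2 ≤ k → Squarefree k →
      Irreducible ((X ^ 4 - C (k * t) * X ^ 2 - C (k ^ 2) : Polynomial ℤ)) ∧
      ¬ ∃ a b : ℚ, ((a : ℝ) + (b : ℝ) * Real.sqrt N) ^ 2 =
          (k : ℝ) * (((t : ℝ) + (u : ℝ) * Real.sqrt N) / 2) :=
  stmt_7_general N t u ht hnorm
end

section
/- For every real M ≥ 1, the set of real numbers of the form a + b√N, with N a positive integer, a, b ∈ (1/2)ℤ≥0, which are quadratic d-numbers and are at most M, is finite. Consequently the set of such quadratic d-numbers is a discrete subset of ℝ. -/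
/-- x is a quadratic d-number of the form a + b√N with N a positive integer and
a, b nonnegative half-integers: x is an algebraic integer and x divided by its
conjugate a − b√N is an algebraic integer. -/
def IsNonnegQuadDNumber (x : ℝ) : Prop :=
  ∃ (N : ℕ) (a b : ℚ), 0 < N ∧ 0 ≤ a ∧ 0 ≤ b ∧
    (∃ z : ℤ, a = z / 2) ∧ (∃ z : ℤ, b = z / 2) ∧
    x = (a : ℝ) + (b : ℝ) * Real.sqrt N ∧ IsIntegral ℤ x ∧
    IsIntegral ℤ (x / ((a : ℝ) - (b : ℝ) * Real.sqrt N))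

/-!
Writing `a = m / 2` and `b = n / 2` with `m, n ∈ ℕ`, we get
`a + b √N = (m + √(n² N)) / 2`. A number `(m + √k) / 2 ≤ M` with `m, k ∈ ℕ` has `m ≤ 2M` and
`k ≤ 4M²`, so there are only finitely many of them.
A subset of `ℝ` whose truncations `{x ≤ M}` are all finite is discrete.
-/

lemma finite_setOf_add_sqrt_div_two_le (M : ℝ) :
    {x : ℝ | ∃ m k : ℕ, x = (m + √k) / 2 ∧ x ≤ M}.Finite := by
  refine (((Set.finite_Iic ⌊2 * M⌋₊).prod (Set.finite_Iic ⌊(2 * M) ^ 2⌋₊)).image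
    fun p : ℕ × ℕ => ((p.1 : ℝ) + √p.2) / 2).subset ?_
  rintro x ⟨m, k, rfl, hxM⟩
  have hsqrt_nonneg : 0 ≤ √(k : ℝ) := Real.sqrt_nonneg _
  have hm : (m : ℝ) ≤ 2 * M := by linarith
  have hk : (k : ℝ) ≤ (2 * M) ^ 2 := (Real.sqrt_le_iff.1 (by linarith)).2
  exact ⟨(m, k), ⟨Nat.le_floor hm, Nat.le_floor hk⟩, rfl⟩

lemma IsNonnegQuadDNumber.exists_eq_add_sqrt_div_two {x : ℝ} (hx : IsNonnegQuadDNumber x) :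
    ∃ m k : ℕ, x = (m + √k) / 2 := by
  obtain ⟨N, a, b, -, ha, hb, ⟨m, rfl⟩, ⟨n, rfl⟩, rfl, -, -⟩ := hx
  lift m to ℕ using by exact_mod_cast (by linarith : (0 : ℚ) ≤ m)
  lift n to ℕ using by exact_mod_cast (by linarith : (0 : ℚ) ≤ n)
  refine ⟨m, n ^ 2 * N, ?_⟩
  push_cast
  rw [Real.sqrt_mul (by positivity), Real.sqrt_sq (by positivity)]
  ring

lemma Real.exists_pos_forall_eq_of_finite_setOf_le {S : Set ℝ}
    (hS : ∀ M, {x | x ∈ S ∧ x ≤ M}.Finite) (x : ℝ) :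
    ∃ δ > 0, ∀ y ∈ S, |y - x| < δ → y = x := by
  set T := {y | y ∈ S ∧ y ≤ x + 1} \ {x}
  have hT : Tᶜ ∈ nhds x :=
    ((hS (x + 1)).sdiff.isClosed).compl_mem_nhds fun h => h.2 rfl
  obtain ⟨ε, hε, hball⟩ := Metric.mem_nhds_iff.1 hT
  refine ⟨min ε 1, lt_min hε one_pos, fun y hy hyx =>
    by_contra fun hne => hball ?_ ⟨⟨hy, ?_⟩, hne⟩⟩
  · rw [Metric.mem_ball, Real.dist_eq]
    exact hyx.trans_le (min_le_left _ _)
  · linarith [(abs_lt.1 (hyx.trans_le (min_le_right _ _))).2]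

/-- For every M ≥ 1 the set of such quadratic d-numbers at most M is finite;
consequently the set of all of them is discrete in ℝ. -/
theorem stmt_12 :
    (∀ M : ℝ, 1 ≤ M → {x : ℝ | IsNonnegQuadDNumber x ∧ x ≤ M}.Finite) ∧
    ∀ x : ℝ, IsNonnegQuadDNumber x → ∃ δ > 0, ∀ y : ℝ,
      IsNonnegQuadDNumber y → |y - x| < δ → y = x := by
  have hfinite (M : ℝ) : {x : ℝ | IsNonnegQuadDNumber x ∧ x ≤ M}.Finite :=
    (finite_setOf_add_sqrt_div_two_le M).subset fun x ⟨hx, hxM⟩ =>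
      let ⟨m, k, hmk⟩ := hx.exists_eq_add_sqrt_div_two
      ⟨m, k, hmk, hxM⟩
  exact ⟨fun M _ => hfinite M,
    fun x _ => Real.exists_pos_forall_eq_of_finite_setOf_le hfinite x⟩
end

section
/- Let κ ≥ 3 be a square-free integer and n ≥ 1 an integer such that κn² − 4 is not a perfect square. Then α = (κn + √((κn)² − 4κ))/2 is an irrational d-number of field norm κ, and the fundamental unit of the real quadratic field ℚ(√((κn)² − 4κ)) has norm +1. -/
/-!
Work in `K = QuadraticAlgebra ℚ D 0 ≅ ℚ(√D)`, `D = (κn)² - 4κ = κ(κn² - 4)`, embedded in `ℝ`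
by `ω ↦ √D`. There `α = (κn + ω)/2` has trace `κn` and norm `κ`, so it is integral, and
`γ = nα - 1` is a unit of norm `1` with `α² = κγ`.

Units of the ring of integers have norm `±1`. A unit `u > 1` is determined by its (integral)
trace and norm, and its conjugate lies in `(-1, 1)`, so there are finitely many units in `(1, C]`
and the positive units are the powers of a fundamental unit `ε`. If some unit had norm `-1`,
then so would `ε`; writing `γ = εᵐ`, `N γ = 1` forces `m` even, and then
`κ = (α / ε^(m/2))²` is a square in `K`. But a square of `K` lying in `ℚ` is `r²` or `D r²`:
the first contradicts square-freeness of `κ`, the second makes `κn² - 4` a square.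
-/

theorem Squarefree.isUnit_of_isSquare {R : Type*} [Monoid R] {x : R} (hx : Squarefree x)
    (h : IsSquare x) : IsUnit x := by
  obtain ⟨r, rfl⟩ := h
  exact (hx r dvd_rfl).mul (hx r dvd_rfl)

theorem Squarefree.not_isSquare_mul {R : Type*} [CommRing R] [IsDomain R] [DecompositionMonoid R]
    {x m : R} (hx : Squarefree x) (h : ¬ x ∣ m) : ¬ IsSquare (x * m) := by
  rintro ⟨r, hr⟩
  have hxr : x ∣ r ^ 2 := by rw [sq, ← hr]; exact dvd_mul_right x m
  obtain ⟨t, rfl⟩ := (hx.dvd_pow_iff_dvd two_ne_zero).mp hxr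
  have hx0 : x ≠ 0 := by rintro rfl; exact not_squarefree_zero hx
  exact h ⟨t * t, mul_left_cancel₀ hx0 (by rw [hr]; ring)⟩

/-- `ε` is an element of least image `> 1`: if `f ε ^ k ≤ f g < f ε ^ (k + 1)`, minimality
forces `g = ε ^ k`. -/
theorem Subgroup.exists_zpow_eq_of_finite_Ioc {G : Type*} [Group G] (H : Subgroup G)
    {f : G →* ℝˣ} (hf : Function.Injective f)
    (hfin : ∀ C : ℝ, {g ∈ H | 1 < (f g : ℝ) ∧ (f g : ℝ) ≤ C}.Finite)
    {g₀ : G} (hg₀ : g₀ ∈ H) (hg₀pos : 0 < (f g₀ : ℝ)) (hg₀1 : g₀ ≠ 1) :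
    ∃ ε ∈ H, ∀ g ∈ H, 0 < (f g : ℝ) → ∃ k : ℤ, g = ε ^ k := by
  have hval (g : G) (k : ℤ) : (f (g ^ k) : ℝ) = (f g : ℝ) ^ k := by
    rw [map_zpow, Units.val_zpow_eq_zpow_val]
  obtain ⟨g₁, hg₁, hg₁1⟩ : ∃ g ∈ H, 1 < (f g : ℝ) := by
    have hne : (f g₀ : ℝ) ≠ 1 := fun h => hg₀1 (hf (Units.ext (by simpa using h)))
    rcases hne.lt_or_gt with h | h
    · refine ⟨g₀⁻¹, H.inv_mem hg₀, ?_⟩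
      rw [map_inv, Units.val_inv_eq_inv_val]
      exact (one_lt_inv₀ hg₀pos).mpr h
    · exact ⟨g₀, hg₀, h⟩
  obtain ⟨ε, ⟨hε, hε1, hεC⟩, hmin⟩ :=
    Set.exists_min_image _ (fun g => (f g : ℝ)) (hfin (f g₁)) ⟨g₁, hg₁, hg₁1, le_rfl⟩
  refine ⟨ε, hε, fun g hg hgpos => ?_⟩
  obtain ⟨k, hk, hk'⟩ := exists_mem_Ico_zpow hgpos hε1
  have hεk : 0 < (f ε : ℝ) ^ k := zpow_pos (one_pos.trans hε1) k
  have hr : (f (g * ε ^ (-k)) : ℝ) = f g / (f ε : ℝ) ^ k := by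
    rw [map_mul, Units.val_mul, hval, zpow_neg, div_eq_mul_inv]
  have hr1 : 1 ≤ (f (g * ε ^ (-k)) : ℝ) := by rwa [hr, one_le_div hεk]
  have hrε : (f (g * ε ^ (-k)) : ℝ) < f ε := by
    rwa [hr, div_lt_iff₀ hεk, ← zpow_one_add₀ (one_pos.trans hε1).ne', add_comm]
  have hr_eq : f (g * ε ^ (-k)) = f 1 := by
    rw [map_one]
    refine Units.ext (hr1.eq_or_lt.resolve_right fun hlt => ?_).symm
    exact (hmin _ ⟨H.mul_mem hg (H.zpow_mem hε _), hlt, hrε.le.trans hεC⟩).not_gt hrε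
  refine ⟨k, ?_⟩
  rw [← mul_inv_eq_one, ← zpow_neg]
  exact hf hr_eq

namespace QuadraticAlgebra

section Integrality

variable {a b : ℚ} {x : QuadraticAlgebra ℚ a b}

theorem isIntegral_star (hx : IsIntegral ℤ x) : IsIntegral ℤ (star x) :=
  hx.map (starRingEnd _).toIntAlgHom

theorem exists_intCast_eq_of_isIntegral_algebraMap {q : ℚ}
    (h : IsIntegral ℤ (algebraMap ℚ (QuadraticAlgebra ℚ a b) q)) : ∃ m : ℤ, (m : ℚ) = q :=
  IsIntegrallyClosed.isIntegral_iff.mp <|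
    (isIntegral_algHom_iff ((Algebra.ofId ℚ _).restrictScalars ℤ) algebraMap_injective).mp h

theorem exists_intCast_eq_norm (hx : IsIntegral ℤ x) : ∃ m : ℤ, (m : ℚ) = norm x := by
  apply exists_intCast_eq_of_isIntegral_algebraMap
  rw [algebraMap_norm_eq_mul_star]
  exact hx.mul (isIntegral_star hx)

theorem exists_intCast_eq_trace (hx : IsIntegral ℤ x) : ∃ m : ℤ, (m : ℚ) = trace x := by
  apply exists_intCast_eq_of_isIntegral_algebraMap
  rw [algebraMap_trace_eq_add_star]
  exact hx.add (isIntegral_star hx)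

open Polynomial in
theorem isIntegral_of_trace_of_norm {t n : ℤ} (ht : trace x = t) (hn : norm x = n) :
    IsIntegral ℤ x := by
  refine ⟨X ^ 2 + (C (-t) * X + C n), monic_X_pow_add degree_linear_lt, ?_⟩
  have hchar := sq_sub_trace_smul_add_norm_eq_zero x
  rw [ht, hn] at hchar
  rw [eval₂_add, eval₂_pow, eval₂_X, eval₂_add, eval₂_mul, eval₂_X, eval₂_C, eval₂_C]
  simpa [Algebra.smul_def, sub_eq_add_neg, add_assoc] using hchar

def unitGroup (a b : ℚ) : Subgroup (QuadraticAlgebra ℚ a b)ˣ :=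
  (integralClosure ℤ (QuadraticAlgebra ℚ a b)).toSubmonoid.units

theorem mem_unitGroup_iff {u : (QuadraticAlgebra ℚ a b)ˣ} :
    u ∈ unitGroup a b ↔
      IsIntegral ℤ (u : QuadraticAlgebra ℚ a b) ∧ IsIntegral ℤ (↑u⁻¹ : QuadraticAlgebra ℚ a b) :=
  Submonoid.mem_units_iff _ _

theorem neg_mem_unitGroup {u : (QuadraticAlgebra ℚ a b)ˣ} (hu : u ∈ unitGroup a b) :
    -u ∈ unitGroup a b := by
  obtain ⟨h, h'⟩ := mem_unitGroup_iff.mp hu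
  exact mem_unitGroup_iff.mpr ⟨by simpa using h.neg, by simpa using h'.neg⟩

theorem norm_eq_one_or_neg_one {u : (QuadraticAlgebra ℚ a b)ˣ} (hu : u ∈ unitGroup a b) :
    norm (u : QuadraticAlgebra ℚ a b) = 1 ∨ norm (u : QuadraticAlgebra ℚ a b) = -1 := by
  obtain ⟨hu, hu'⟩ := mem_unitGroup_iff.mp hu
  obtain ⟨m, hm⟩ := exists_intCast_eq_norm hu
  obtain ⟨m', hm'⟩ := exists_intCast_eq_norm hu'
  have hmm' : m * m' = 1 := by
    exact_mod_cast (show (m * m' : ℚ) = 1 by rw [hm, hm', ← map_mul, Units.mul_inv, map_one])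
  rw [← hm]
  rcases Int.eq_one_or_neg_one_of_mul_eq_one hmm' with h | h <;> simp [h]

end Integrality

section RealQuadratic

variable {d : ℚ} {s : ℝ}

/-- The hypothesis of the `Field` instance on `QuadraticAlgebra ℚ D 0`. -/
theorem fact_of_not_isSquare {D : ℤ} (h : ¬ IsSquare D) :
    Fact (∀ r : ℚ, r ^ 2 ≠ (D : ℚ) + 0 * r) :=
  ⟨fun r hr => h (Rat.isSquare_intCast_iff.mp ⟨r, by linear_combination -hr⟩)⟩

theorem eq_sq_re_or_eq_mul_sq_im {y : QuadraticAlgebra ℚ d 0} {c : ℚ}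
    (h : y * y = algebraMap ℚ _ c) : c = y.re ^ 2 ∨ c = d * y.im ^ 2 := by
  have hre := congrArg re h
  have him := congrArg im h
  simp only [re_mul, im_mul, algebraMap_re, algebraMap_im] at hre him
  rcases mul_eq_zero.mp (show y.re * y.im = 0 by linarith) with h0 | h0
  · right; rw [← hre, h0]; ring
  · left; rw [← hre, h0]; ring

theorem eq_or_eq_star_of_trace_eq_of_norm_eq (hd : d ≠ 0) {x y : QuadraticAlgebra ℚ d 0}
    (ht : trace x = trace y) (hn : norm x = norm y) : x = y ∨ x = star y := by
  simp only [trace_def, norm_def] at ht hn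
  have hre : x.re = y.re := by linarith
  have him : x.im ^ 2 = y.im ^ 2 := by
    apply mul_left_cancel₀ hd
    rw [hre] at hn
    linear_combination -hn
  rcases sq_eq_sq_iff_eq_or_eq_neg.mp him with h | h
  · left; ext <;> assumption
  · right; ext <;> simp [hre, h]

noncomputable def realEmbedding (hs : s * s = d) : QuadraticAlgebra ℚ d 0 →ₐ[ℚ] ℝ :=
  lift ⟨s, by simp [hs, Algebra.smul_def]⟩

theorem realEmbedding_apply (hs : s * s = d) (x : QuadraticAlgebra ℚ d 0) :
    realEmbedding hs x = x.re + x.im * s := by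
  simp [realEmbedding, Algebra.smul_def]

theorem realEmbedding_mul_star (hs : s * s = d) (x : QuadraticAlgebra ℚ d 0) :
    realEmbedding hs x * realEmbedding hs (star x) = norm x := by
  rw [← map_mul, ← algebraMap_norm_eq_mul_star, AlgHom.commutes, eq_ratCast]

theorem mkOfMulEqOne_mem_unitGroup [Fact (∀ r : ℚ, r ^ 2 ≠ d + 0 * r)] (hs : s * s = d)
    {x : QuadraticAlgebra ℚ d 0} (hx0 : x ≠ 0) (hx : IsIntegral ℤ (realEmbedding hs x))
    (hx' : IsIntegral ℤ (realEmbedding hs x)⁻¹) :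
    Units.mkOfMulEqOne x x⁻¹ (mul_inv_cancel₀ hx0) ∈ unitGroup d 0 := by
  have hiff (y : QuadraticAlgebra ℚ d 0) := isIntegral_algHom_iff
    ((realEmbedding hs).restrictScalars ℤ) (realEmbedding hs).toRingHom.injective (x := y)
  exact mem_unitGroup_iff.mpr ⟨(hiff x).mp hx, (hiff x⁻¹).mp (by simpa using hx')⟩

theorem abs_realEmbedding_star_lt_one (hs : s * s = d) {u : (QuadraticAlgebra ℚ d 0)ˣ}
    (hu : u ∈ unitGroup d 0) (h : 1 < realEmbedding hs u) :
    |realEmbedding hs (star (u : QuadraticAlgebra ℚ d 0))| < 1 := by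
  have hmul := congrArg abs (realEmbedding_mul_star hs (u : QuadraticAlgebra ℚ d 0))
  have hnorm : |((norm (u : QuadraticAlgebra ℚ d 0) : ℚ) : ℝ)| = 1 := by
    rcases norm_eq_one_or_neg_one hu with h | h <;> simp [h]
  rw [hnorm, abs_mul, abs_of_pos (one_pos.trans h)] at hmul
  nlinarith [abs_nonneg (realEmbedding hs (star (u : QuadraticAlgebra ℚ d 0)))]

/-- A unit `u > 1` is determined by its trace and norm (its conjugate has absolute value `< 1`),
and its trace is an integer of absolute value at most `C + 1`. -/
theorem finite_unitGroup_Ioc (hd : d ≠ 0) (hs : s * s = d) (C : ℝ) :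
    {u ∈ unitGroup d 0 | 1 < realEmbedding hs u ∧ realEmbedding hs u ≤ C}.Finite := by
  set M := ⌈C + 1⌉
  let F (u : (QuadraticAlgebra ℚ d 0)ˣ) : ℚ × ℚ :=
    (trace (u : QuadraticAlgebra ℚ d 0), norm (u : QuadraticAlgebra ℚ d 0))
  refine Set.Finite.of_finite_image (f := F) ?_ ?_
  · refine (((Set.finite_Icc (-M) M).image ((↑) : ℤ → ℚ)).prod (Set.toFinite {1, -1})).subset ?_
    rintro _ ⟨u, ⟨hu, hu1, huC⟩, rfl⟩
    obtain ⟨m, hm⟩ := exists_intCast_eq_trace (mem_unitGroup_iff.mp hu).1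
    have hmR : (m : ℝ) =
        realEmbedding hs u + realEmbedding hs (star (u : QuadraticAlgebra ℚ d 0)) := by
      rw [← map_add, ← algebraMap_trace_eq_add_star, AlgHom.commutes, eq_ratCast, ← hm,
        Rat.cast_intCast]
    have hstar := abs_lt.mp (abs_realEmbedding_star_lt_one hs hu hu1)
    have hM : C + 1 ≤ (M : ℝ) := Int.le_ceil _
    refine ⟨⟨m, ⟨?_, ?_⟩, hm⟩, norm_eq_one_or_neg_one hu⟩
    · exact_mod_cast (show (-M : ℝ) ≤ m by linarith)
    · exact_mod_cast (show (m : ℝ) ≤ M by linarith)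
  · rintro u ⟨hu, hu1, -⟩ v ⟨hv, hv1, -⟩ huv
    simp only [F, Prod.mk.injEq] at huv
    rcases eq_or_eq_star_of_trace_eq_of_norm_eq hd huv.1 huv.2 with h | h
    · exact Units.ext h
    · have hv' := abs_lt.mp (abs_realEmbedding_star_lt_one hs hv hv1)
      rw [← h] at hv'
      linarith [hv'.2]

theorem norm_eq_one_of_not_isSquare [Fact (∀ r : ℚ, r ^ 2 ≠ d + 0 * r)] (hs : s * s = d)
    {γ : (QuadraticAlgebra ℚ d 0)ˣ} (hγ : γ ∈ unitGroup d 0)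
    (hγn : norm (γ : QuadraticAlgebra ℚ d 0) = 1) (hγpos : 0 < realEmbedding hs γ)
    (hsq : ¬ IsSquare (γ : QuadraticAlgebra ℚ d 0))
    {u : (QuadraticAlgebra ℚ d 0)ˣ} (hu : u ∈ unitGroup d 0) :
    norm (u : QuadraticAlgebra ℚ d 0) = 1 := by
  have hd : d ≠ 0 := fun h => Fact.out (p := ∀ r : ℚ, r ^ 2 ≠ d + 0 * r) 0 (by simp [h])
  set f := Units.map (realEmbedding hs).toMonoidHom
  have hf : Function.Injective f := Units.map_injective (realEmbedding hs).toRingHom.injective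
  have hnorm (x : (QuadraticAlgebra ℚ d 0)ˣ) (k : ℤ) :
      norm ((x ^ k : (QuadraticAlgebra ℚ d 0)ˣ) : QuadraticAlgebra ℚ d 0) =
        norm (x : QuadraticAlgebra ℚ d 0) ^ k := by
    have h := congrArg Units.val (map_zpow (Units.map (norm : QuadraticAlgebra ℚ d 0 →* ℚ)) x k)
    rwa [Units.val_zpow_eq_zpow_val, Units.coe_map, Units.coe_map] at h
  by_contra hne
  have hun := (norm_eq_one_or_neg_one hu).resolve_left hne
  obtain ⟨v, hv, hvpos, hvn⟩ : ∃ v ∈ unitGroup d 0,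
      0 < (f v : ℝ) ∧ norm (v : QuadraticAlgebra ℚ d 0) = -1 := by
    rcases (f u).ne_zero.lt_or_gt with h | h
    · exact ⟨-u, neg_mem_unitGroup hu, by simpa [f] using h, by simpa using hun⟩
    · exact ⟨u, hu, h, hun⟩
  have hv1 : v ≠ 1 := by rintro rfl; norm_num at hvn
  obtain ⟨ε, hε, hgen⟩ :=
    (unitGroup d 0).exists_zpow_eq_of_finite_Ioc hf (finite_unitGroup_Ioc hd hs) hv hvpos hv1
  obtain ⟨j, rfl⟩ := hgen v hv hvpos
  obtain ⟨m, rfl⟩ := hgen γ hγ hγpos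
  rw [hnorm] at hvn hγn
  have hεn : norm (ε : QuadraticAlgebra ℚ d 0) = -1 :=
    (norm_eq_one_or_neg_one hε).resolve_left fun h => by norm_num [h] at hvn
  rw [hεn] at hγn
  obtain ⟨r, rfl⟩ := (Int.even_or_odd m).resolve_right fun hodd => by
    rw [hodd.neg_one_zpow] at hγn; norm_num at hγn
  exact hsq ⟨(ε ^ r : (QuadraticAlgebra ℚ d 0)ˣ), by rw [zpow_add, Units.val_mul]⟩

theorem norm_eq_one_of_mul_self_eq [Fact (∀ r : ℚ, r ^ 2 ≠ d + 0 * r)] (hs : s * s = d)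
    {γ : (QuadraticAlgebra ℚ d 0)ˣ} (hγ : γ ∈ unitGroup d 0)
    (hγn : norm (γ : QuadraticAlgebra ℚ d 0) = 1) (hγpos : 0 < realEmbedding hs γ)
    {α : QuadraticAlgebra ℚ d 0} {κ : ℚ} (hα : α * α = algebraMap ℚ _ κ * γ)
    (hκ : ¬ IsSquare κ) (hκd : ∀ t : ℚ, κ ≠ d * t ^ 2)
    {u : (QuadraticAlgebra ℚ d 0)ˣ} (hu : u ∈ unitGroup d 0) :
    norm (u : QuadraticAlgebra ℚ d 0) = 1 := by
  refine norm_eq_one_of_not_isSquare hs hγ hγn hγpos (fun ⟨z, hz⟩ => ?_) hu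
  have hz0 : z ≠ 0 := by rintro rfl; simp at hz
  have hsq : (α / z) * (α / z) = algebraMap ℚ _ κ := by
    rw [div_mul_div_comm, hα, hz, mul_div_assoc, div_self (mul_ne_zero hz0 hz0), mul_one]
  rcases eq_sq_re_or_eq_mul_sq_im hsq with h | h
  · exact hκ ⟨_, h.trans (sq _)⟩
  · exact hκd _ h

end RealQuadratic

section DNumber

variable (κ n : ℤ)

abbrev disc : ℤ := (κ * n) ^ 2 - 4 * κ

def dNumber : QuadraticAlgebra ℚ (disc κ n : ℚ) 0 := ⟨κ * n / 2, 1 / 2⟩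

theorem norm_dNumber : norm (dNumber κ n) = κ := by
  simp [dNumber, norm_def]; ring

theorem isIntegral_dNumber : IsIntegral ℤ (dNumber κ n) :=
  isIntegral_of_trace_of_norm (t := κ * n) (by simp [dNumber, trace_def]; ring) (norm_dNumber κ n)

def dNumberUnit : (QuadraticAlgebra ℚ (disc κ n : ℚ) 0)ˣ :=
  Units.mkOfMulEqOne (n * dNumber κ n - 1) (n * star (dNumber κ n) - 1)
    (by ext <;> simp [dNumber] <;> ring)

theorem dNumberUnit_mem_unitGroup : dNumberUnit κ n ∈ unitGroup (disc κ n : ℚ) 0 := by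
  have h := isIntegral_dNumber κ n
  refine mem_unitGroup_iff.mpr ⟨?_, ?_⟩
  · exact ((isIntegral_intCast n).mul h).sub isIntegral_one
  · exact ((isIntegral_intCast n).mul (isIntegral_star h)).sub isIntegral_one

theorem norm_dNumberUnit :
    norm (dNumberUnit κ n : QuadraticAlgebra ℚ (disc κ n : ℚ) 0) = 1 := by
  simp [dNumberUnit, dNumber, norm_def]; ring

theorem dNumber_mul_self : dNumber κ n * dNumber κ n = algebraMap ℚ _ κ * dNumberUnit κ n := by
  ext <;> simp [dNumberUnit, dNumber] <;> ring

theorem dNumber_eq_dNumberUnit_mul_star :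
    dNumber κ n = dNumberUnit κ n * star (dNumber κ n) := by
  ext <;> simp [dNumberUnit, dNumber] <;> ring

section Embedding

variable {s : ℝ} (hs : s * s = (disc κ n : ℚ))

theorem realEmbedding_dNumber :
    realEmbedding hs (dNumber κ n) = (((κ * n : ℤ) : ℝ) + s) / 2 := by
  simp [realEmbedding_apply, dNumber]; ring

theorem realEmbedding_star_dNumber :
    realEmbedding hs (star (dNumber κ n)) = (((κ * n : ℤ) : ℝ) - s) / 2 := by
  simp [realEmbedding_apply, dNumber]; ring

theorem realEmbedding_dNumber_mul_star :
    realEmbedding hs (dNumber κ n) * realEmbedding hs (star (dNumber κ n)) = κ := by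
  rw [realEmbedding_mul_star, norm_dNumber, Rat.cast_intCast]

theorem isIntegral_realEmbedding_dNumber : IsIntegral ℤ (realEmbedding hs (dNumber κ n)) :=
  (isIntegral_dNumber κ n).map ((realEmbedding hs).restrictScalars ℤ)

variable {κ n}

theorem isIntegral_realEmbedding_dNumber_div_star (hκ : κ ≠ 0) :
    IsIntegral ℤ (realEmbedding hs (dNumber κ n) / realEmbedding hs (star (dNumber κ n))) := by
  have hstar := right_ne_zero_of_mul
    ((realEmbedding_dNumber_mul_star κ n hs).symm ▸ Int.cast_ne_zero.mpr hκ)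
  have hdiv : realEmbedding hs (dNumber κ n) / realEmbedding hs (star (dNumber κ n)) =
      realEmbedding hs (dNumberUnit κ n) := by
    rw [div_eq_iff hstar, ← map_mul, ← dNumber_eq_dNumberUnit_mul_star]
  rw [hdiv]
  exact (mem_unitGroup_iff.mp (dNumberUnit_mem_unitGroup κ n)).1.map
    ((realEmbedding hs).restrictScalars ℤ)

theorem realEmbedding_dNumberUnit_pos (hκ : 3 ≤ κ) (hn : 1 ≤ n) (hs0 : 0 ≤ s) :
    0 < realEmbedding hs (dNumberUnit κ n) := by
  have hκn : (3 : ℝ) ≤ κ * n := by exact_mod_cast (by nlinarith : 3 ≤ κ * n)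
  have hn' : (1 : ℝ) ≤ n := by exact_mod_cast hn
  simp only [dNumberUnit, Units.val_mkOfMulEqOne, map_sub, map_mul, map_intCast, map_one,
    realEmbedding_dNumber κ n hs]
  push_cast
  nlinarith

end Embedding

variable {κ n}

theorem not_isSquare_disc (hκ : 3 ≤ κ) (hsf : Squarefree κ) : ¬ IsSquare (disc κ n) := by
  have h4 : ¬ κ ∣ 4 := by
    intro h
    have hκ4 := Int.le_of_dvd (by norm_num) h
    interval_cases κ
    · norm_num at h
    · exact absurd (hsf 2 ⟨1, by norm_num⟩) (by decide)
  rw [disc, show (κ * n) ^ 2 - 4 * κ = κ * (κ * n ^ 2 - 4) by ring]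
  refine hsf.not_isSquare_mul fun h => h4 ?_
  have h4' := (dvd_mul_right κ (n ^ 2)).sub h
  rwa [sub_sub_cancel] at h4'

theorem ne_disc_mul_sq (hκ : κ ≠ 0) (hns : ¬ IsSquare (κ * n ^ 2 - 4)) (t : ℚ) :
    (κ : ℚ) ≠ disc κ n * t ^ 2 := by
  intro h
  have ht : t ≠ 0 := by rintro rfl; simp [hκ] at h
  refine hns (Rat.isSquare_intCast_iff.mp ⟨t⁻¹, ?_⟩)
  rw [← mul_inv]
  refine eq_inv_of_mul_eq_one_left (mul_left_cancel₀ (Int.cast_ne_zero.mpr hκ : (κ : ℚ) ≠ 0) ?_)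
  push_cast [disc] at h ⊢
  linear_combination -h

theorem sq_sub_disc_mul_sq_eq_one {s : ℝ} (hs : s * s = (disc κ n : ℚ)) (hκ : 3 ≤ κ)
    (hsf : Squarefree κ) (hn : 1 ≤ n) (hns : ¬ IsSquare (κ * n ^ 2 - 4)) (hs0 : 0 ≤ s)
    {a b : ℚ} (h0 : (a : ℝ) + b * s ≠ 0)
    (hint : IsIntegral ℤ ((a : ℝ) + b * s)) (hinv : IsIntegral ℤ ((a : ℝ) + b * s)⁻¹) :
    a ^ 2 - disc κ n * b ^ 2 = 1 := by
  have hfield := fact_of_not_isSquare (not_isSquare_disc (n := n) hκ hsf)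
  have hκsq : ¬ IsSquare (κ : ℚ) := fun h => by
    have hunit := hsf.isUnit_of_isSquare (Rat.isSquare_intCast_iff.mp h)
    rw [Int.isUnit_iff] at hunit
    omega
  rw [← realEmbedding_apply hs ⟨a, b⟩] at h0 hint hinv
  have hx0 : (⟨a, b⟩ : QuadraticAlgebra ℚ (disc κ n : ℚ) 0) ≠ 0 := fun h => h0 (by simp [h])
  have hnorm := norm_eq_one_of_mul_self_eq hs (dNumberUnit_mem_unitGroup κ n) (norm_dNumberUnit κ n)
    (realEmbedding_dNumberUnit_pos hs hκ hn hs0) (dNumber_mul_self κ n) hκsq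
    (ne_disc_mul_sq (by omega) hns) (mkOfMulEqOne_mem_unitGroup hs hx0 hint hinv)
  simpa [norm_def, sq, mul_assoc] using hnorm

end DNumber

end QuadraticAlgebra

open QuadraticAlgebra in
/-- For square-free κ ≥ 3 and n ≥ 1 with κn² − 4 not a perfect square (and the
implicit assumption (κn)² − 4κ > 0 making ℚ(√((κn)²−4κ)) a real quadratic
field): α = (κn + √((κn)²−4κ))/2 is an irrational d-number of field norm κ, and
every unit of the ring of integers of ℚ(√((κn)²−4κ)) has norm +1, i.e. the
fundamental unit has norm +1. -/
theorem stmt_14 (κ n : ℤ) (hκ : 3 ≤ κ) (hsf : Squarefree κ) (hn : 1 ≤ n)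
    (hns : ¬ IsSquare (κ * n ^ 2 - 4))
    (hpos : 0 < (κ * n) ^ 2 - 4 * κ) :
    Irrational ((((κ * n : ℤ) : ℝ) + Real.sqrt (((κ * n : ℤ) : ℝ) ^ 2 - 4 * (κ : ℝ))) / 2) ∧
    IsIntegral ℤ ((((κ * n : ℤ) : ℝ) + Real.sqrt (((κ * n : ℤ) : ℝ) ^ 2 - 4 * (κ : ℝ))) / 2) ∧
    IsIntegral ℤ (((((κ * n : ℤ) : ℝ) + Real.sqrt (((κ * n : ℤ) : ℝ) ^ 2 - 4 * (κ : ℝ))) / 2) /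
      ((((κ * n : ℤ) : ℝ) - Real.sqrt (((κ * n : ℤ) : ℝ) ^ 2 - 4 * (κ : ℝ))) / 2)) ∧
    ((((κ * n : ℤ) : ℝ) + Real.sqrt (((κ * n : ℤ) : ℝ) ^ 2 - 4 * (κ : ℝ))) / 2) *
      ((((κ * n : ℤ) : ℝ) - Real.sqrt (((κ * n : ℤ) : ℝ) ^ 2 - 4 * (κ : ℝ))) / 2) = (κ : ℝ) ∧
    (∀ a b : ℚ,
      (a : ℝ) + (b : ℝ) * Real.sqrt (((κ * n : ℤ) : ℝ) ^ 2 - 4 * (κ : ℝ)) ≠ 0 →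
      IsIntegral ℤ ((a : ℝ) + (b : ℝ) * Real.sqrt (((κ * n : ℤ) : ℝ) ^ 2 - 4 * (κ : ℝ))) →
      IsIntegral ℤ ((a : ℝ) + (b : ℝ) * Real.sqrt (((κ * n : ℤ) : ℝ) ^ 2 - 4 * (κ : ℝ)))⁻¹ →
      a ^ 2 - (((κ * n) ^ 2 - 4 * κ : ℤ) : ℚ) * b ^ 2 = 1) := by
  have hsqrt : ((κ * n : ℤ) : ℝ) ^ 2 - 4 * (κ : ℝ) = ((disc κ n : ℚ) : ℝ) := by push_cast; ring
  rw [hsqrt]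
  set s := Real.sqrt ((disc κ n : ℚ) : ℝ)
  have hs : s * s = (disc κ n : ℚ) := Real.mul_self_sqrt (by exact_mod_cast hpos.le)
  have hirr : Irrational s := by
    simpa [s] using irrational_sqrt_intCast_iff.mpr ⟨not_isSquare_disc hκ hsf, hpos.le⟩
  rw [← realEmbedding_dNumber κ n hs, ← realEmbedding_star_dNumber κ n hs]
  refine ⟨?_, isIntegral_realEmbedding_dNumber κ n hs,
    isIntegral_realEmbedding_dNumber_div_star hs (by omega), realEmbedding_dNumber_mul_star κ n hs,
    fun a b => sq_sub_disc_mul_sq_eq_one hs hκ hsf hn hns (Real.sqrt_nonneg _)⟩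
  rw [realEmbedding_dNumber κ n hs]
  simpa using (hirr.intCast_add (κ * n)).div_natCast two_ne_zero
end

section
/- Let M ≥ 1 be an integer. The number of real quadratic d-numbers α = a + b√N (N ≥ 2 square-free, a, b ∈ (1/2)ℤ) satisfying α ≥ σ(α) ≥ 1 and α ≤ M, over all square-free N, is at most 8M(M+1)(2M−1)². -/
/-!
Write `s = σ(x) = a - b√N`. Then `x + s = 2a` and `4xs = (2a)² - (2b)²N` are integers, and `x` is
recovered from them as the larger root `(t + √(t² - m)) / 2` of `X² - tX + m/4`. The conditions
`1 ≤ s ≤ x ≤ M` confine `t` to `[2, 2M]` and `m` to `[4, 4M²]`, so at most `(2M - 1)(4M² - 3)` values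
of `x` occur.
-/

/-- x is a real quadratic d-number a + b√N (N ≥ 2 square-free, a, b
half-integers) with x ≥ σ(x) ≥ 1, where σ(x) = a − b√N is the Galois
conjugate. -/
def IsGalMaxQuadDNumber (x : ℝ) : Prop :=
  ∃ (N : ℕ) (a b : ℚ), 2 ≤ N ∧ Squarefree N ∧
    (∃ z : ℤ, a = z / 2) ∧ (∃ z : ℤ, b = z / 2) ∧
    x = (a : ℝ) + (b : ℝ) * Real.sqrt N ∧ IsIntegral ℤ x ∧
    IsIntegral ℤ (x / ((a : ℝ) - (b : ℝ) * Real.sqrt N)) ∧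
    1 ≤ (a : ℝ) - (b : ℝ) * Real.sqrt N ∧ (a : ℝ) - (b : ℝ) * Real.sqrt N ≤ x

/-- The larger root of `X² - tX + m/4` at `p = (t, m)`. -/
noncomputable def largerRoot (p : ℤ × ℤ) : ℝ := (p.1 + √(p.1 ^ 2 - p.2)) / 2

lemma add_add_sqrt_sq_sub_div_two {x s : ℝ} (h : s ≤ x) :
    (x + s + √((x + s) ^ 2 - 4 * (x * s))) / 2 = x := by
  rw [show (x + s) ^ 2 - 4 * (x * s) = (x - s) ^ 2 by ring, Real.sqrt_sq (by linarith)]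
  ring

lemma IsGalMaxQuadDNumber.exists_conj {x : ℝ} (hx : IsGalMaxQuadDNumber x) :
    ∃ s : ℝ, 1 ≤ s ∧ s ≤ x ∧ (∃ t : ℤ, x + s = t) ∧ ∃ m : ℤ, 4 * (x * s) = m := by
  obtain ⟨N, a, b, -, -, ⟨z, rfl⟩, ⟨w, rfl⟩, rfl, -, -, hs1, hsx⟩ := hx
  refine ⟨_, hs1, hsx, ⟨z, ?_⟩, ⟨z ^ 2 - w ^ 2 * N, ?_⟩⟩
  · push_cast
    ring
  · push_cast
    linear_combination (-(w : ℝ) ^ 2) * Real.sq_sqrt (Nat.cast_nonneg (α := ℝ) N)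

/-- The pairs `(x + σ(x), 4xσ(x))` allowed by `1 ≤ σ(x) ≤ x ≤ M`. -/
noncomputable def traceNormBox (M : ℕ) : Finset (ℤ × ℤ) :=
  Finset.Icc 2 (2 * (M : ℤ)) ×ˢ Finset.Icc 4 (4 * (M : ℤ) ^ 2)

lemma setOf_isGalMaxQuadDNumber_le_subset (M : ℕ) :
    {x : ℝ | IsGalMaxQuadDNumber x ∧ x ≤ M} ⊆ largerRoot '' ↑(traceNormBox M) := by
  rintro x ⟨hx, hxM⟩
  obtain ⟨s, hs1, hsx, ⟨t, ht⟩, ⟨m, hm⟩⟩ := hx.exists_conj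
  refine ⟨(t, m), ?_, ?_⟩
  · simp only [traceNormBox, Finset.mem_coe, Finset.mem_product, Finset.mem_Icc]
    refine ⟨⟨?_, ?_⟩, ?_, ?_⟩
    all_goals
      rify
      nlinarith
  · rw [largerRoot, ← ht, ← hm]
    exact add_add_sqrt_sq_sub_div_two hsx

lemma card_traceNormBox_le (M : ℕ) :
    (traceNormBox M).card ≤ 8 * M * (M + 1) * (2 * M - 1) ^ 2 := by
  rw [traceNormBox, Finset.card_product, Int.card_Icc, Int.card_Icc]
  rcases Nat.eq_zero_or_pos M with rfl | hM
  · simp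
  have h₁ : (2 * (M : ℤ) + 1 - 2).toNat = 2 * M - 1 := by omega
  have h₂ : (4 * (M : ℤ) ^ 2 + 1 - 4).toNat = 4 * M ^ 2 - 3 := by
    have : (M : ℤ) ^ 2 = ((M ^ 2 : ℕ) : ℤ) := by push_cast; rfl
    omega
  have h₃ : 4 * M ^ 2 - 3 ≤ 8 * M * (M + 1) * (2 * M - 1) := by
    have : 1 ≤ 2 * M - 1 := by omega
    calc 4 * M ^ 2 - 3 ≤ 8 * M * (M + 1) := (Nat.sub_le _ _).trans (by nlinarith)
      _ ≤ 8 * M * (M + 1) * (2 * M - 1) := Nat.le_mul_of_pos_right _ this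
  calc (2 * (M : ℤ) + 1 - 2).toNat * (4 * (M : ℤ) ^ 2 + 1 - 4).toNat
      = (2 * M - 1) * (4 * M ^ 2 - 3) := by rw [h₁, h₂]
    _ ≤ (2 * M - 1) * (8 * M * (M + 1) * (2 * M - 1)) := Nat.mul_le_mul_left _ h₃
    _ = 8 * M * (M + 1) * (2 * M - 1) ^ 2 := by ring

theorem stmt_16_general (M : ℕ) :
    {x : ℝ | IsGalMaxQuadDNumber x ∧ x ≤ M}.Finite ∧
    {x : ℝ | IsGalMaxQuadDNumber x ∧ x ≤ M}.ncard ≤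
      8 * M * (M + 1) * (2 * M - 1) ^ 2 := by
  have hsub := setOf_isGalMaxQuadDNumber_le_subset M
  have hbox := (traceNormBox M).finite_toSet
  refine ⟨(hbox.image largerRoot).subset hsub, ?_⟩
  calc _ ≤ _ := Set.ncard_le_ncard hsub (hbox.image largerRoot)
    _ ≤ _ := Set.ncard_image_le hbox
    _ = _ := Set.ncard_coe_finset _
    _ ≤ _ := card_traceNormBox_le M

/-- The number of real quadratic d-numbers α with α ≥ σ(α) ≥ 1 and α ≤ M is at
most 8M(M+1)(2M−1)². -/
theorem stmt_16 (M : ℕ) (hM : 1 ≤ M) :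
    {x : ℝ | IsGalMaxQuadDNumber x ∧ x ≤ M}.Finite ∧
    {x : ℝ | IsGalMaxQuadDNumber x ∧ x ≤ M}.ncard ≤
      8 * M * (M + 1) * (2 * M - 1) ^ 2 :=
  stmt_16_general M
end

section
/- Let N ≥ 2 be square-free with norm(ε_N) = −1, and suppose α is a d-number in ℚ(√N) with α ≥ σ(α) ≥ 1, written canonically as α = ℓ·ε_N^m·(√N)^δ with ℓ ∈ ℤ≥1, m ∈ ℤ≥0, δ ∈ {0,1} (so m ≡ δ mod 2). Then ℓ ≥ ε_N^m·(√N)^{−δ}, and consequently α ≥ ε_N^{2m}. -/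
/-!
The norm condition says ε·σ(ε) = −1, so σ(ε) = −ε⁻¹. Since m ≡ δ (mod 2), the signs in
σ(α) = ℓ·(−ε⁻¹)^m·(−√N)^δ cancel, leaving σ(α) = ℓ·(√N)^δ / ε^m. Hence σ(α) ≥ 1 says exactly
that ε^m ≤ ℓ·(√N)^δ, and multiplying by ε^m gives ε^{2m} ≤ α.
-/

lemma neg_pow_mul_neg_pow_of_mod_two_eq {R : Type*} [CommRing R] {m δ : ℕ}
    (h : m % 2 = δ % 2) (a b : R) : (-a) ^ m * (-b) ^ δ = a ^ m * b ^ δ := by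
  have heven : Even (m + δ) := by rw [Nat.even_add, Nat.even_iff, Nat.even_iff, h]
  calc (-a) ^ m * (-b) ^ δ = (-1) ^ (m + δ) * (a ^ m * b ^ δ) := by
        rw [neg_pow a, neg_pow b, pow_add]; ring
    _ = a ^ m * b ^ δ := by rw [heven.neg_one_pow, one_mul]

lemma half_sub_eq_neg_inv_half_add {K : Type*} [Field K] [NeZero (2 : K)] {t u s : K}
    (h : t ^ 2 - s ^ 2 * u ^ 2 = -4) : (t - u * s) / 2 = -((t + u * s) / 2)⁻¹ := by
  have hprod : (t + u * s) / 2 * -((t - u * s) / 2) = 1 := by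
    field_simp
    linear_combination -h
  rw [← eq_inv_of_mul_eq_one_right hprod, neg_neg]

lemma half_sub_pow_mul_neg_pow {K : Type*} [Field K] [NeZero (2 : K)] {t u s : K} {m δ : ℕ}
    (h : t ^ 2 - s ^ 2 * u ^ 2 = -4) (hparity : m % 2 = δ % 2) :
    ((t - u * s) / 2) ^ m * (-s) ^ δ = s ^ δ / ((t + u * s) / 2) ^ m := by
  rw [half_sub_eq_neg_inv_half_add h, neg_pow_mul_neg_pow_of_mod_two_eq hparity, inv_pow,
    inv_mul_eq_div]

theorem stmt_18_general (N : ℕ) (hN : 2 ≤ N) (t u : ℤ)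
    (hnorm : t ^ 2 - (N : ℤ) * u ^ 2 = -4)
    (ε : ℝ) (hε : ε = ((t : ℝ) + (u : ℝ) * Real.sqrt N) / 2)
    (hε1 : 1 < ε)
    (ℓ : ℤ) (m δ : ℕ)
    (hparity : m % 2 = δ % 2)
    (α : ℝ) (hα : α = (ℓ : ℝ) * ε ^ m * Real.sqrt N ^ δ)
    (σα : ℝ) (hσα : σα = (ℓ : ℝ) * (((t : ℝ) - (u : ℝ) * Real.sqrt N) / 2) ^ m *
      (-Real.sqrt N) ^ δ)
    (h1 : 1 ≤ σα) :
    ε ^ m * (Real.sqrt N ^ δ)⁻¹ ≤ (ℓ : ℝ) ∧ ε ^ (2 * m) ≤ α := by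
  set s := Real.sqrt N
  have hs : 0 < s := Real.sqrt_pos.2 (by exact_mod_cast (by omega : 0 < N))
  have hnormR : (t : ℝ) ^ 2 - s ^ 2 * (u : ℝ) ^ 2 = -4 := by
    rw [Real.sq_sqrt (Nat.cast_nonneg N)]; exact_mod_cast hnorm
  have hεm : 0 < ε ^ m := pow_pos (by linarith) m
  have hσα' : σα = ℓ * s ^ δ / ε ^ m := by
    rw [hσα, mul_assoc, half_sub_pow_mul_neg_pow hnormR hparity, ← hε, mul_div_assoc]
  have key : ε ^ m ≤ ℓ * s ^ δ := (one_le_div hεm).1 (hσα' ▸ h1)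
  refine ⟨by rwa [← div_eq_mul_inv, div_le_iff₀ (pow_pos hs δ)], ?_⟩
  calc ε ^ (2 * m) = ε ^ m * ε ^ m := by rw [two_mul, pow_add]
    _ ≤ ℓ * s ^ δ * ε ^ m := by gcongr
    _ = α := by rw [hα]; ring

/-- If the fundamental unit ε_N = (t + u√N)/2 of ℚ(√N) has norm −1 and
α = ℓ·ε_N^m·(√N)^δ (ℓ ≥ 1, m ≥ 0, δ ∈ {0,1}, m ≡ δ mod 2) satisfies
α ≥ σ(α) ≥ 1, then ℓ ≥ ε_N^m·(√N)^{−δ} and α ≥ ε_N^{2m}. -/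
theorem stmt_18 (N : ℕ) (hN : 2 ≤ N) (hsf : Squarefree N) (t u : ℤ)
    (ht : 0 < t) (hu : 0 < u)
    (hnorm : t ^ 2 - (N : ℤ) * u ^ 2 = -4)
    (ε : ℝ) (hε : ε = ((t : ℝ) + (u : ℝ) * Real.sqrt N) / 2)
    (hε1 : 1 < ε) (hεint : IsIntegral ℤ ε)
    (hmin : ∀ x : ℝ, IsIntegral ℤ x → IsIntegral ℤ x⁻¹ →
      (∃ a b : ℚ, x = (a : ℝ) + (b : ℝ) * Real.sqrt N) → 1 < x → ε ≤ x)
    (ℓ : ℤ) (hℓ : 1 ≤ ℓ) (m δ : ℕ) (hδ : δ = 0 ∨ δ = 1)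
    (hparity : m % 2 = δ % 2)
    (α : ℝ) (hα : α = (ℓ : ℝ) * ε ^ m * Real.sqrt N ^ δ)
    (σα : ℝ) (hσα : σα = (ℓ : ℝ) * (((t : ℝ) - (u : ℝ) * Real.sqrt N) / 2) ^ m *
      (-Real.sqrt N) ^ δ)
    (h1 : 1 ≤ σα) (h2 : σα ≤ α) :
    ε ^ m * (Real.sqrt N ^ δ)⁻¹ ≤ (ℓ : ℝ) ∧ ε ^ (2 * m) ≤ α :=
  stmt_18_general N hN t u hnorm ε hε hε1 ℓ m δ hparity α hα σα hσα h1
end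

section
/- Let N ≥ 2 be square-free with norm(ε_N) = −1, let M ≥ 1 be real, and suppose there exists a d-number α in ℚ(√N) with α ≥ σ(α) ≥ 1 and α ≤ M. Then N + 2√N ≤ 4M − 1. -/
/-!
The quotient `x = α / σ(α)` is an irrational unit of `ℚ(√N)` of norm `+1` with `1 < x ≤ α`
(integrality of `x⁻¹ = σ(x)` comes from the minimal polynomial `X² - 2A X + 1` of `x = A + B√N`
having integer coefficients). Since `ε_N` has norm `-1`, `x ≠ ε_N`, so `x / ε_N` is again a unit
`> 1`; minimality of `ε_N` gives `ε_N ≤ x / ε_N`, i.e. `ε_N² ≤ x ≤ M`, and `ε_N ≥ (1 + √N) / 2`.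
-/

open Polynomial

theorem isIntegral_of_sq_sub_mul_add {R : Type*} [CommRing R] {x : R} {m n : ℤ}
    (h : x ^ 2 - m * x + n = 0) : IsIntegral ℤ x := by
  refine ⟨X ^ 2 - C m * X + C n, by monicity!, ?_⟩
  rw [← aeval_def]
  simpa using h

section Quadratic

variable {K : Type*} [Field K] [CharZero K] {x : K}

theorem minpoly_eq_of_sq_sub_mul_add (hx : x ∉ Set.range (algebraMap ℚ K)) {c d : ℚ}
    (h : x ^ 2 - c * x + d = 0) : minpoly ℚ x = X ^ 2 - C c * X + C d := by
  have hmonic : (X ^ 2 - C c * X + C d : ℚ[X]).Monic := by monicity!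
  have hroot : aeval x (X ^ 2 - C c * X + C d : ℚ[X]) = 0 := by simpa using h
  have hint : IsIntegral ℚ x := ⟨_, hmonic, hroot⟩
  refine (eq_of_monic_of_dvd_of_natDegree_le (minpoly.monic hint) hmonic
    (minpoly.dvd ℚ x hroot) ?_).symm
  have hdeg : (X ^ 2 - C c * X + C d : ℚ[X]).natDegree = 2 := by compute_degree!
  rw [hdeg]
  exact (minpoly.two_le_natDegree_iff hint).mpr hx

theorem exists_intCast_eq_of_isIntegral (hx : x ∉ Set.range (algebraMap ℚ K))
    (hint : IsIntegral ℤ x) {c d : ℚ} (h : x ^ 2 - c * x + d = 0) : ∃ m : ℤ, (m : ℚ) = c := by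
  have hcoeff := congrArg (coeff · 1) <|
    (minpoly_eq_of_sq_sub_mul_add hx h).symm.trans
      (minpoly.isIntegrallyClosed_eq_field_fractions' ℚ hint)
  refine ⟨-(minpoly ℤ x).coeff 1, ?_⟩
  simp only [coeff_add, coeff_sub, coeff_X_pow, OfNat.one_ne_ofNat, ↓reduceIte, coeff_mul_X,
    coeff_C_zero, zero_sub, coeff_C_succ, add_zero, algebraMap_int_eq, coeff_map, eq_intCast]
    at hcoeff
  push_cast
  linarith

end Quadratic

theorem Squarefree.irrational_sqrt {N : ℕ} (hsf : Squarefree N) (hN : 2 ≤ N) :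
    Irrational √(N : ℝ) := by
  rw [irrational_sqrt_natCast_iff]
  rintro ⟨k, rfl⟩
  obtain rfl := Nat.isUnit_iff.mp (hsf k dvd_rfl)
  omega

section QuadraticField

variable {N : ℕ}

def InQSqrt (N : ℕ) (x : ℝ) : Prop := ∃ a b : ℚ, x = a + b * √N

theorem InQSqrt.mul {x y : ℝ} (hx : InQSqrt N x) (hy : InQSqrt N y) : InQSqrt N (x * y) := by
  obtain ⟨a, b, rfl⟩ := hx
  obtain ⟨c, d, rfl⟩ := hy
  refine ⟨a * c + b * d * N, a * d + b * c, ?_⟩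
  push_cast
  linear_combination (b : ℝ) * d * Real.sq_sqrt N.cast_nonneg

theorem InQSqrt.inv {x : ℝ} (hx : InQSqrt N x) : InQSqrt N x⁻¹ := by
  obtain ⟨a, b, rfl⟩ := hx
  have hnorm : ((a : ℝ) + b * √N) * (a - b * √N) = ((a ^ 2 - b ^ 2 * N : ℚ) : ℝ) := by
    push_cast
    linear_combination -(b : ℝ) ^ 2 * Real.sq_sqrt N.cast_nonneg
  by_cases hq : a ^ 2 - b ^ 2 * N = 0
  · rw [hq, Rat.cast_zero, mul_eq_zero] at hnorm
    rcases hnorm with h | h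
    · exact ⟨0, 0, by simp [h]⟩
    · refine ⟨(2 * a)⁻¹, 0, ?_⟩
      rw [show (b : ℝ) * √N = a by linarith]
      push_cast
      ring
  · refine ⟨a / (a ^ 2 - b ^ 2 * N), -b / (a ^ 2 - b ^ 2 * N), inv_eq_of_mul_eq_one_right ?_⟩
    have hq' : ((a ^ 2 - b ^ 2 * N : ℚ) : ℝ) ≠ 0 := by exact_mod_cast hq
    push_cast at hq' ⊢
    field_simp
    linear_combination -(b : ℝ) ^ 2 * Real.sq_sqrt N.cast_nonneg

def IsQuadraticUnit (N : ℕ) (x : ℝ) : Prop :=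
  IsIntegral ℤ x ∧ IsIntegral ℤ x⁻¹ ∧ InQSqrt N x

theorem IsQuadraticUnit.mul {x y : ℝ} (hx : IsQuadraticUnit N x) (hy : IsQuadraticUnit N y) :
    IsQuadraticUnit N (x * y) :=
  ⟨hx.1.mul hy.1, by rw [mul_inv]; exact hx.2.1.mul hy.2.1, hx.2.2.mul hy.2.2⟩

theorem IsQuadraticUnit.inv {x : ℝ} (hx : IsQuadraticUnit N x) : IsQuadraticUnit N x⁻¹ :=
  ⟨hx.2.1, by rw [inv_inv]; exact hx.1, hx.2.2.inv⟩

theorem IsQuadraticUnit.sq_le_of_ne {ε x : ℝ} (hε : IsQuadraticUnit N ε) (hε0 : 0 < ε)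
    (hmin : ∀ y, IsQuadraticUnit N y → 1 < y → ε ≤ y) (hx : IsQuadraticUnit N x)
    (hx1 : 1 < x) (hne : x ≠ ε) : ε ^ 2 ≤ x := by
  have hεx : ε < x := (hmin x hx hx1).lt_of_ne' hne
  have hε_le := hmin (x * ε⁻¹) (hx.mul hε.inv) (by rwa [← div_eq_mul_inv, one_lt_div hε0])
  calc ε ^ 2 ≤ x * ε⁻¹ * ε := by rw [sq]; exact mul_le_mul_of_nonneg_right hε_le hε0.le
    _ = x := by field_simp

theorem isIntegral_sub_mul_sqrt {a b : ℚ} (hirr : Irrational (a + b * √N))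
    (hint : IsIntegral ℤ ((a : ℝ) + b * √N)) : IsIntegral ℤ ((a : ℝ) - b * √N) := by
  have hroot : ((a : ℝ) + b * √N) ^ 2 - ((2 * a : ℚ) : ℝ) * (a + b * √N)
      + ((a ^ 2 - b ^ 2 * N : ℚ) : ℝ) = 0 := by
    push_cast
    linear_combination (b : ℝ) ^ 2 * Real.sq_sqrt N.cast_nonneg
  obtain ⟨m, hm⟩ := exists_intCast_eq_of_isIntegral hirr hint hroot
  have hconj : (a : ℝ) - b * √N = m - (a + b * √N) := by
    rw [← Rat.cast_intCast, hm]
    push_cast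
    ring
  rw [hconj]
  exact (isIntegral_intCast m).sub hint

theorem inv_add_mul_sqrt_of_norm_eq_one {a b : ℚ} (h : a ^ 2 - b ^ 2 * N = 1) :
    ((a : ℝ) + b * √N)⁻¹ = a - b * √N := by
  refine inv_eq_of_mul_eq_one_right ?_
  have h' : (a : ℝ) ^ 2 - b ^ 2 * N = 1 := by exact_mod_cast h
  linear_combination h' - (b : ℝ) ^ 2 * Real.sq_sqrt N.cast_nonneg

theorem isQuadraticUnit_of_norm_eq_one (hr : Irrational √(N : ℝ)) {a b : ℚ} (hb : b ≠ 0)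
    (h : a ^ 2 - b ^ 2 * N = 1) (hint : IsIntegral ℤ ((a : ℝ) + b * √N)) :
    IsQuadraticUnit N (a + b * √N) := by
  refine ⟨hint, ?_, a, b, rfl⟩
  rw [inv_add_mul_sqrt_of_norm_eq_one h]
  exact isIntegral_sub_mul_sqrt ((hr.ratCast_mul hb).ratCast_add a) hint

theorem pos_of_sub_mul_sqrt_lt {a b : ℚ} (h0 : 0 < (a : ℝ) - b * √N)
    (hlt : (a : ℝ) - b * √N < a + b * √N) : 0 < a ∧ 0 < b ∧ 0 < a ^ 2 - b ^ 2 * N := by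
  have hnorm : ((a ^ 2 - b ^ 2 * N : ℚ) : ℝ) = (a + b * √N) * (a - b * √N) := by
    push_cast
    linear_combination (b : ℝ) ^ 2 * Real.sq_sqrt N.cast_nonneg
  refine ⟨by exact_mod_cast (by linarith : (0 : ℝ) < a), ?_, ?_⟩
  · exact_mod_cast pos_of_mul_pos_left (by linarith : (0 : ℝ) < b * √N) (Real.sqrt_nonneg _)
  · exact_mod_cast hnorm ▸ mul_pos (by linarith) h0

/-- The witness is `α / σ(α) = α² / Nm(α)`. -/
theorem exists_norm_eq_one_eq_div_conj {a b : ℚ} (ha : a ≠ 0) (hb : b ≠ 0)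
    (hq : a ^ 2 - b ^ 2 * N ≠ 0) : ∃ A B : ℚ, B ≠ 0 ∧ A ^ 2 - B ^ 2 * N = 1 ∧
      ((a : ℝ) + b * √N) / (a - b * √N) = A + B * √N := by
  refine ⟨(a ^ 2 + b ^ 2 * N) / (a ^ 2 - b ^ 2 * N), 2 * a * b / (a ^ 2 - b ^ 2 * N),
    by positivity, by field_simp; ring, ?_⟩
  have hr2 := Real.sq_sqrt (N.cast_nonneg (α := ℝ))
  have hq' : (a : ℝ) ^ 2 - b ^ 2 * N ≠ 0 := by exact_mod_cast hq
  have hβ : (a : ℝ) - b * √N ≠ 0 := by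
    intro h0
    apply hq'
    linear_combination ((a : ℝ) + b * √N) * h0 + (b : ℝ) ^ 2 * hr2
  rw [div_eq_iff hβ]
  push_cast
  field_simp
  linear_combination (2 * (a : ℝ) * b ^ 2) * hr2

section FundamentalUnit

variable {t u : ℤ}

theorem inv_half_add_mul_sqrt (h : t ^ 2 - N * u ^ 2 = -4) :
    ((t + u * √N) / 2 : ℝ)⁻¹ = (t + u * √N) / 2 - t := by
  refine inv_eq_of_mul_eq_one_right ?_
  have h' : (t : ℝ) ^ 2 - N * u ^ 2 = -4 := by exact_mod_cast h
  linear_combination (u : ℝ) ^ 2 / 4 * Real.sq_sqrt N.cast_nonneg - h' / 4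

theorem isQuadraticUnit_half_add_mul_sqrt (h : t ^ 2 - N * u ^ 2 = -4) :
    IsQuadraticUnit N ((t + u * √N) / 2) := by
  have hint : IsIntegral ℤ ((t + u * √N) / 2 : ℝ) := by
    refine isIntegral_of_sq_sub_mul_add (m := t) (n := -1) ?_
    have h' : (t : ℝ) ^ 2 - N * u ^ 2 = -4 := by exact_mod_cast h
    push_cast
    linear_combination (u : ℝ) ^ 2 / 4 * Real.sq_sqrt N.cast_nonneg - h' / 4
  refine ⟨hint, inv_half_add_mul_sqrt h ▸ hint.sub (isIntegral_intCast t), t / 2, u / 2, ?_⟩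
  push_cast
  ring

/-- Units of norm `1` and of norm `-1` differ: comparing `x + x⁻¹ = 2A` with `ε - ε⁻¹ = t`
would make `√N` rational. -/
theorem add_mul_sqrt_ne_half_add_mul_sqrt (hr : Irrational √(N : ℝ)) {A B : ℚ} (hB : B ≠ 0)
    (hAB : A ^ 2 - B ^ 2 * N = 1) (h : t ^ 2 - N * u ^ 2 = -4) :
    (A : ℝ) + B * √N ≠ (t + u * √N) / 2 := by
  intro heq
  have hinv := inv_half_add_mul_sqrt h
  rw [← heq, inv_add_mul_sqrt_of_norm_eq_one hAB] at hinv
  exact hr ⟨t / (2 * B), by push_cast; field_simp; linarith⟩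

theorem one_add_sqrt_div_two_le (ht : 0 < t) (hu : 0 < u) :
    (1 + √N) / 2 ≤ ((t + u * √N) / 2 : ℝ) := by
  have ht' : (1 : ℝ) ≤ t := by exact_mod_cast ht
  have hu' : (1 : ℝ) ≤ u := by exact_mod_cast hu
  nlinarith [Real.sqrt_nonneg N]

end FundamentalUnit

end QuadraticField

theorem stmt_19_general (N : ℕ) (hN : 2 ≤ N) (hsf : Squarefree N) (t u : ℤ)
    (ht : 0 < t) (hu : 0 < u)
    (hnorm : t ^ 2 - (N : ℤ) * u ^ 2 = -4)
    (hmin : ∀ x : ℝ, IsIntegral ℤ x → IsIntegral ℤ x⁻¹ →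
      (∃ a b : ℚ, x = (a : ℝ) + (b : ℝ) * Real.sqrt N) → 1 < x →
      ((t : ℝ) + (u : ℝ) * Real.sqrt N) / 2 ≤ x)
    (M : ℝ)
    (h : ∃ a b : ℚ, (∃ z : ℤ, a = z / 2) ∧ (∃ z : ℤ, b = z / 2) ∧
      IsIntegral ℤ ((a : ℝ) + (b : ℝ) * Real.sqrt N) ∧
      IsIntegral ℤ (((a : ℝ) + (b : ℝ) * Real.sqrt N) /
        ((a : ℝ) - (b : ℝ) * Real.sqrt N)) ∧
      Irrational ((a : ℝ) + (b : ℝ) * Real.sqrt N) ∧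
      1 ≤ (a : ℝ) - (b : ℝ) * Real.sqrt N ∧
      (a : ℝ) - (b : ℝ) * Real.sqrt N ≤ (a : ℝ) + (b : ℝ) * Real.sqrt N ∧
      (a : ℝ) + (b : ℝ) * Real.sqrt N ≤ M) :
    (N : ℝ) + 2 * Real.sqrt N ≤ 4 * M - 1 := by
  obtain ⟨a, b, -, -, -, hxint, hαirr, hβ1, hβα, hαM⟩ := h
  have hr := hsf.irrational_sqrt hN
  have hβα' : (a : ℝ) - b * √N < a + b * √N := hβα.lt_of_ne fun h ↦ hαirr ⟨a, by linarith⟩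
  obtain ⟨ha, hb, hq⟩ := pos_of_sub_mul_sqrt_lt (by linarith) hβα'
  obtain ⟨A, B, hB, hAB, hx⟩ := exists_norm_eq_one_eq_div_conj ha.ne' hb.ne' hq.ne'
  have hx1 : 1 < (A : ℝ) + B * √N := by rw [← hx, one_lt_div (by linarith)]; exact hβα'
  have hxα : (A : ℝ) + B * √N ≤ a + b * √N := hx ▸ div_le_self (by linarith) hβ1
  have hε := one_add_sqrt_div_two_le (N := N) ht hu
  have hsq := (isQuadraticUnit_half_add_mul_sqrt hnorm).sq_le_of_ne
    (by linarith [Real.sqrt_nonneg N]) (fun y hy ↦ hmin y hy.1 hy.2.1 hy.2.2)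
    (isQuadraticUnit_of_norm_eq_one hr hB hAB (hx ▸ hxint)) hx1
    (add_mul_sqrt_ne_half_add_mul_sqrt hr hB hAB hnorm)
  calc (N : ℝ) + 2 * √N = 4 * ((1 + √N) / 2) ^ 2 - 1 := by
        linear_combination -Real.sq_sqrt N.cast_nonneg
    _ ≤ 4 * ((t + u * √N) / 2) ^ 2 - 1 := by gcongr
    _ ≤ 4 * M - 1 := by linarith

/-- If ℚ(√N) has a (fundamental) unit ε_N = (t + u√N)/2 of norm −1, M ≥ 1, and
there exists an (irrational) d-number α = a + b√N in ℚ(√N) with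
α ≥ σ(α) ≥ 1 and α ≤ M, then N + 2√N ≤ 4M − 1. -/
theorem stmt_19 (N : ℕ) (hN : 2 ≤ N) (hsf : Squarefree N) (t u : ℤ)
    (ht : 0 < t) (hu : 0 < u)
    (hnorm : t ^ 2 - (N : ℤ) * u ^ 2 = -4)
    (hεint : IsIntegral ℤ (((t : ℝ) + (u : ℝ) * Real.sqrt N) / 2))
    (hε1 : 1 < ((t : ℝ) + (u : ℝ) * Real.sqrt N) / 2)
    (hmin : ∀ x : ℝ, IsIntegral ℤ x → IsIntegral ℤ x⁻¹ →
      (∃ a b : ℚ, x = (a : ℝ) + (b : ℝ) * Real.sqrt N) → 1 < x →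
      ((t : ℝ) + (u : ℝ) * Real.sqrt N) / 2 ≤ x)
    (M : ℝ) (hM : 1 ≤ M)
    (h : ∃ a b : ℚ, (∃ z : ℤ, a = z / 2) ∧ (∃ z : ℤ, b = z / 2) ∧
      IsIntegral ℤ ((a : ℝ) + (b : ℝ) * Real.sqrt N) ∧
      IsIntegral ℤ (((a : ℝ) + (b : ℝ) * Real.sqrt N) /
        ((a : ℝ) - (b : ℝ) * Real.sqrt N)) ∧
      Irrational ((a : ℝ) + (b : ℝ) * Real.sqrt N) ∧
      1 ≤ (a : ℝ) - (b : ℝ) * Real.sqrt N ∧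
      (a : ℝ) - (b : ℝ) * Real.sqrt N ≤ (a : ℝ) + (b : ℝ) * Real.sqrt N ∧
      (a : ℝ) + (b : ℝ) * Real.sqrt N ≤ M) :
    (N : ℝ) + 2 * Real.sqrt N ≤ 4 * M - 1 :=
  stmt_19_general N hN hsf t u ht hu hnorm hmin M h
end
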